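/- arXiv:1303.2721 — 4 statements merged into one kernel-verified Lean document; each statement's English description precedes it below -/
import Mathlib

section
/- Given R = R' > 0 and Q = Q' > 0, suppose Y = Y' > 0 in ℝ^{n×n}, π > 0 and θ > 0 are such that the block matrix [[Z̄, Y(λ̄Q)^{1/2}, Y, Y], [(λ̄Q)^{1/2}Y, −I, 0, 0], [Y, 0, −(1/π)I, 0], [Y, 0, 0, −(1/((N−1)θ))I]] is negative definite, where Z̄ = A Y + Y A' − (λ̲²/λ̄²) B₁ R^{-1} B₁' + (p²/π + q²/θ) B₂ B₂', p² = max_i p_i², q² = max_i q_i², λ̲ = min_i λ_i, λ̄ = max_i λ_i. Then the choices F = −(λ̲/λ̄²) R^{-1} B₁', π_i = π and θ_i = θ (i = 1,…,N), together with the same Y, satisfy for every i = 1,…,N the LMI: the block matrix [[Z_i, F', Y(λ_iQ)^{1/2}, Y, 𝟏'⊗Y], [F, −(1/λ_i²)R^{-1}, 0, 0, 0], [(λ_iQ)^{1/2}Y, 0, −I, 0, 0], [Y, 0, 0, −(1/π_i)I, 0], [𝟏⊗Y, 0, 0, 0, −Θ_i^{-1}]] is negative definite, where 𝟏 = (1,…,1)'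 ∈ ℝ^{N−1}, Z_i = A Y + Y A' + λ_i F' B₁' + λ_i B₁ F + (π_i^{-1} p_i² + θ_i^{-1} q_i²) B₂ B₂', and Θ_i = diag(θ_1,…,θ_{i−1}, θ_{i+1},…,θ_N) ⊗ I_n. -/
/-!
Both LMIs are negative definite iff their Schur complements with respect to the block-diagonal
lower-right corners are, which are Riccati-type inequalities. For the gain
`F = -(λ̲/λ̄²) R⁻¹B₁'` the `i`-th coupled Riccati matrix lies below the single one by
`c₁ B₁R⁻¹B₁' + c₂ B₂B₂' + c₃ YQY` with `c₁ = 2x - x² - λ̲²/λ̄²` for `x = λᵢλ̲/λ̄²`,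
`c₂ = p²/π + q²/θ - (pᵢ²/π + qᵢ²/θ)` and `c₃ = λ̄ - λᵢ`, all nonnegative.
-/
open Matrix

open scoped ComplexOrder in
/-- The square root of a positive semidefinite matrix, as `Matrix.PosSemidef.sqrt` was defined
in Mathlib of December 2024 (removed since). -/
noncomputable def Matrix.PosSemidef.sqrt {n 𝕜 : Type*} [Fintype n] [RCLike 𝕜] [DecidableEq n]
    {A : Matrix n n 𝕜} (hA : A.PosSemidef) : Matrix n n 𝕜 :=
  hA.1.eigenvectorUnitary.1 * diagonal ((↑) ∘ (√·) ∘ hA.1.eigenvalues) *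
    (star hA.1.eigenvectorUnitary : Matrix n n 𝕜)

namespace Matrix

section Sqrt

open scoped ComplexOrder

variable {n 𝕜 : Type*} [Fintype n] [DecidableEq n] [RCLike 𝕜] {A : Matrix n n 𝕜}

theorem PosSemidef.sqrt_eq_conjStarAlgAut (hA : A.PosSemidef) :
    hA.sqrt = Unitary.conjStarAlgAut 𝕜 _ hA.1.eigenvectorUnitary
      (diagonal (RCLike.ofReal ∘ (√·) ∘ hA.1.eigenvalues)) := rfl

theorem PosSemidef.isHermitian_sqrt (hA : A.PosSemidef) : hA.sqrt.IsHermitian := by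
  rw [hA.sqrt_eq_conjStarAlgAut]
  refine IsSelfAdjoint.map ?_ _
  exact isHermitian_diagonal_of_self_adjoint _ (by ext; simp)

theorem PosSemidef.sqrt_mul_self (hA : A.PosSemidef) : hA.sqrt * hA.sqrt = A := by
  conv_rhs => rw [hA.1.spectral_theorem]
  rw [hA.sqrt_eq_conjStarAlgAut, ← map_mul, diagonal_mul_diagonal]
  congr with i
  simp [← RCLike.ofReal_mul, Real.mul_self_sqrt (hA.eigenvalues_nonneg i)]

end Sqrt

theorem PosSemidef.smul_sqrt_mul_self {n : Type*} [Fintype n] [DecidableEq n]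
    {A : Matrix n n ℝ} (hA : A.PosSemidef) {c : ℝ} (hc : 0 ≤ c) :
    (√c • hA.sqrt) * (√c • hA.sqrt) = c • A := by
  rw [smul_mul_smul_comm, Real.mul_self_sqrt hc, hA.sqrt_mul_self]

section Schur

open scoped ComplexOrder

variable {m l 𝕜 : Type*} [Fintype m] [Fintype l] [DecidableEq m] [DecidableEq l] [RCLike 𝕜]

theorem posDef_fromBlocks₂₂_iff (A : Matrix m m 𝕜) (B : Matrix m l 𝕜) {D : Matrix l l 𝕜}
    (hD : D.PosDef) [Invertible D] :
    (fromBlocks A B Bᴴ D).PosDef ↔ (A - B * D⁻¹ * Bᴴ).PosDef := by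
  have hunit : IsUnit (fromBlocks A B Bᴴ D) ↔ IsUnit (A - B * D⁻¹ * Bᴴ) := by
    rw [isUnit_fromBlocks_iff_of_invertible₂₂, invOf_eq_nonsing_inv]
  exact ⟨fun h => ((PosDef.fromBlocks₂₂ A B hD).1 h.posSemidef).posDef_iff_isUnit.2
      (hunit.1 h.isUnit),
    fun h => ((PosDef.fromBlocks₂₂ A B hD).2 h.posSemidef).posDef_iff_isUnit.2 (hunit.2 h.isUnit)⟩

theorem PosDef.fromBlocks_zero {A : Matrix m m 𝕜} {D : Matrix l l 𝕜} (hA : A.PosDef)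
    (hD : D.PosDef) : (fromBlocks A 0 0 D).PosDef := by
  have := hD.isUnit.invertible
  simpa using (posDef_fromBlocks₂₂_iff A 0 hD).2 (by simpa using hA)

end Schur

theorem PosDef.neg_of_sub_posSemidef {m : Type*} [Fintype m] {X Y : Matrix m m ℝ}
    (hX : (-X).PosDef) (hXY : (X - Y).PosSemidef) : (-Y).PosDef := by
  simpa only [neg_add_eq_sub, sub_sub_cancel_left] using hX.add_posSemidef hXY

theorem PosSemidef.mul_mul_transpose_same {m k : Type*} [Fintype m] [Finite k]
    {A : Matrix m m ℝ} (hA : A.PosSemidef) (B : Matrix k m ℝ) : (B * A * Bᵀ).PosSemidef := by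
  simpa only [conjTranspose_eq_transpose_of_trivial] using hA.mul_mul_conjTranspose_same B

theorem fromCols_mul_fromBlocks_zero_mul_transpose {R m l l' : Type*} [CommSemiring R]
    [Fintype l] [Fintype l'] (B : Matrix m l R) (C : Matrix m l' R)
    (W₁ : Matrix l l R) (W₂ : Matrix l' l' R) :
    fromCols B C * fromBlocks W₁ 0 0 W₂ * (fromCols B C)ᵀ = B * W₁ * Bᵀ + C * W₂ * Cᵀ := by
  simp [fromCols_mul_fromBlocks, transpose_fromCols, fromCols_mul_fromRows]

theorem submatrix_id_snd_mul_transpose {R m k ι : Type*} [CommSemiring R] [Fintype k]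
    [Fintype ι] (M : Matrix m k R) :
    M.submatrix id (Prod.snd : ι × k → k) * (M.submatrix id (Prod.snd : ι × k → k))ᵀ =
      Fintype.card ι • (M * Mᵀ) := by
  ext i j
  rw [mul_apply, Fintype.sum_prod_type]
  simp [mul_apply]

section NegDef

variable {l l' : Type*} [Fintype l] [Fintype l'] [DecidableEq l] [DecidableEq l']

def IsNegDefWithInv (D W : Matrix l l ℝ) : Prop :=
  (-D).PosDef ∧ D * W = -1

theorem isNegDefWithInv_neg_one : IsNegDefWithInv (-1 : Matrix l l ℝ) 1 :=
  ⟨by simpa using PosDef.one, by simp⟩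

theorem isNegDefWithInv_neg_inv_smul {P W : Matrix l l ℝ} (hP : P.PosDef) (hPW : P * W = 1)
    {c : ℝ} (hc : 0 < c) : IsNegDefWithInv (-(c⁻¹ • P)) (c • W) :=
  ⟨by simpa using hP.smul (inv_pos.2 hc), by
    rw [Matrix.neg_mul, smul_mul_smul_comm, inv_mul_cancel₀ hc.ne', hPW, one_smul]⟩

theorem IsNegDefWithInv.fromBlocks_zero {D₁ W₁ : Matrix l l ℝ} {D₂ W₂ : Matrix l' l' ℝ}
    (h₁ : IsNegDefWithInv D₁ W₁) (h₂ : IsNegDefWithInv D₂ W₂) :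
    IsNegDefWithInv (fromBlocks D₁ 0 0 D₂) (fromBlocks W₁ 0 0 W₂) :=
  ⟨by simpa [fromBlocks_neg] using h₁.1.fromBlocks_zero h₂.1, by
    simp [fromBlocks_multiply, h₁.2, h₂.2, ← fromBlocks_one, fromBlocks_neg]⟩

theorem IsNegDefWithInv.neg_fromBlocks_posDef_iff {m : Type*} [Fintype m] [DecidableEq m]
    {A : Matrix m m ℝ} {B : Matrix m l ℝ} {D W : Matrix l l ℝ} (h : IsNegDefWithInv D W) :
    (-fromBlocks A B Bᵀ D).PosDef ↔ (-(A + B * W * Bᵀ)).PosDef := by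
  have := h.1.isUnit.invertible
  have hinv : (-D)⁻¹ = W := inv_eq_right_inv (by rw [Matrix.neg_mul, h.2, neg_neg])
  have hschur := posDef_fromBlocks₂₂_iff (-A) (-B) h.1
  rw [hinv, conjTranspose_eq_transpose_of_trivial] at hschur
  rw [fromBlocks_neg, ← transpose_neg, hschur]
  simp only [transpose_neg, Matrix.neg_mul, Matrix.mul_neg, neg_neg, neg_add]
  rfl

end NegDef

section LMI

variable {n : Type*} [Fintype n] [DecidableEq n] {Z Y S : Matrix n n ℝ}

theorem neg_singleLMI_posDef_iff (hY : Y.IsSymm) (hS : S.IsSymm) {a b : ℝ} (ha : 0 < a)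
    (hb : 0 < b) :
    (-fromBlocks Z (fromCols (Y * S) (fromCols Y Y)) (fromRows (S * Y) (fromRows Y Y))
      (fromBlocks (-1) 0 0 (fromBlocks (-(a⁻¹ • 1)) 0 0 (-(b⁻¹ • 1))))).PosDef ↔
    (-(Z + Y * (S * S) * Y + (a + b) • (Y * Y))).PosDef := by
  have hrows : fromRows (S * Y) (fromRows Y Y) = (fromCols (Y * S) (fromCols Y Y))ᵀ := by
    simp [transpose_fromCols, hY.eq, hS.eq]
  rw [hrows, (isNegDefWithInv_neg_one.fromBlocks_zero
    ((isNegDefWithInv_neg_inv_smul PosDef.one (mul_one 1) ha).fromBlocks_zero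
      (isNegDefWithInv_neg_inv_smul PosDef.one (mul_one 1) hb))).neg_fromBlocks_posDef_iff,
    fromCols_mul_fromBlocks_zero_mul_transpose, fromCols_mul_fromBlocks_zero_mul_transpose]
  simp only [transpose_mul, hY.eq, hS.eq, Matrix.mul_one, Matrix.mul_smul, Matrix.smul_mul,
    add_smul, Matrix.mul_assoc, add_assoc]

theorem neg_coupledLMI_posDef_iff {p ι : Type*} [Fintype p] [DecidableEq p] [Fintype ι]
    [DecidableEq ι] {F : Matrix p n ℝ} {R : Matrix p p ℝ} (hR : R.PosDef) (hY : Y.IsSymm)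
    (hS : S.IsSymm) {ℓ a b : ℝ} (hℓ : ℓ ≠ 0) (ha : 0 < a) (hb : 0 < b) :
    (-fromBlocks Z
      (fromCols Fᵀ (fromCols (Y * S) (fromCols Y (of fun c (x : ι × n) => Y c x.2))))
      (fromRows F (fromRows (S * Y) (fromRows Y (of fun (x : ι × n) c => Y x.2 c))))
      (fromBlocks (-((ℓ ^ 2)⁻¹ • R⁻¹)) 0 0 (fromBlocks (-1) 0 0
        (fromBlocks (-(a⁻¹ • 1)) 0 0 (-(diagonal fun _ : ι × n => b⁻¹)))))).PosDef ↔
    (-(Z + ℓ ^ 2 • (Fᵀ * R * F) + Y * (S * S) * Y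
      + (a + Fintype.card ι * b) • (Y * Y))).PosDef := by
  have hrep : (of fun c (x : ι × n) => Y c x.2) = Y.submatrix id Prod.snd := rfl
  have hrows : fromRows F (fromRows (S * Y) (fromRows Y (of fun (x : ι × n) c => Y x.2 c))) =
      (fromCols Fᵀ (fromCols (Y * S) (fromCols Y (Y.submatrix id Prod.snd))))ᵀ := by
    rw [transpose_fromCols, transpose_fromCols, transpose_fromCols, transpose_transpose,
      transpose_mul, hY.eq, hS.eq, transpose_submatrix, hY.eq]
    rfl
  have hRR : R⁻¹ * R = 1 := nonsing_inv_mul R hR.det_pos.ne'.isUnit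
  rw [hrep, hrows, ← smul_one_eq_diagonal,
    ((isNegDefWithInv_neg_inv_smul hR.inv hRR (by positivity)).fromBlocks_zero
      (isNegDefWithInv_neg_one.fromBlocks_zero
        ((isNegDefWithInv_neg_inv_smul PosDef.one (mul_one 1) ha).fromBlocks_zero
          (isNegDefWithInv_neg_inv_smul PosDef.one (mul_one 1) hb)))).neg_fromBlocks_posDef_iff,
    fromCols_mul_fromBlocks_zero_mul_transpose, fromCols_mul_fromBlocks_zero_mul_transpose,
    fromCols_mul_fromBlocks_zero_mul_transpose]
  simp only [Matrix.mul_smul, Matrix.mul_one, Matrix.smul_mul, submatrix_id_snd_mul_transpose,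
    ← Nat.cast_smul_eq_nsmul ℝ, smul_smul]
  simp only [transpose_transpose, transpose_mul, hY.eq, hS.eq, add_smul, mul_comm b,
    Matrix.mul_assoc, add_assoc]

end LMI

section Gain

variable {n p : Type*} [Fintype p] [DecidableEq p] {B : Matrix n p ℝ} {R : Matrix p p ℝ}

theorem mul_neg_smul_inv_mul_transpose (c : ℝ) :
    B * -(c • (R⁻¹ * Bᵀ)) = -(c • (B * R⁻¹ * Bᵀ)) := by
  rw [Matrix.mul_neg, Matrix.mul_smul, Matrix.mul_assoc]

theorem neg_smul_inv_mul_transpose_transpose_mul (hR : R.IsSymm) (c : ℝ) :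
    (-(c • (R⁻¹ * Bᵀ)))ᵀ * Bᵀ = -(c • (B * R⁻¹ * Bᵀ)) := by
  rw [transpose_neg, transpose_smul, transpose_mul, transpose_transpose, transpose_nonsing_inv,
    hR.eq, Matrix.neg_mul, Matrix.smul_mul]

theorem neg_smul_inv_mul_transpose_transpose_mul_mul_self (hR : R.PosDef) (c : ℝ) :
    (-(c • (R⁻¹ * Bᵀ)))ᵀ * R * -(c • (R⁻¹ * Bᵀ)) = c ^ 2 • (B * R⁻¹ * Bᵀ) := by
  rw [transpose_neg, transpose_smul, transpose_mul, transpose_transpose, transpose_nonsing_inv,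
    (isHermitian_iff_isSymm.1 hR.1).eq]
  simp only [Matrix.neg_mul, Matrix.mul_neg, smul_neg, neg_neg, Matrix.smul_mul, Matrix.mul_smul,
    smul_smul, Matrix.mul_assoc, nonsing_inv_mul_cancel_left _ _ hR.det_pos.ne'.isUnit, sq]

end Gain

end Matrix

theorem sq_div_sq_le_two_mul_sub_sq {lo hi ℓ : ℝ} (hlo : 0 < lo) (hloℓ : lo ≤ ℓ)
    (hℓhi : ℓ ≤ hi) :
    lo ^ 2 / hi ^ 2 ≤ 2 * ℓ * (lo / hi ^ 2) - ℓ ^ 2 * (lo / hi ^ 2) ^ 2 := by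
  have hhi : 0 < hi := by linarith
  have hgap : 0 ≤ hi ^ 2 - ℓ * lo := by nlinarith
  have key : 2 * ℓ * (lo / hi ^ 2) - ℓ ^ 2 * (lo / hi ^ 2) ^ 2 - lo ^ 2 / hi ^ 2 =
      lo * (hi ^ 2 * (ℓ - lo) + ℓ * (hi ^ 2 - ℓ * lo)) / hi ^ 4 := by
    field_simp
    ring
  rw [← sub_nonneg, key]
  exact div_nonneg (mul_nonneg hlo.le (add_nonneg
    (mul_nonneg (sq_nonneg hi) (sub_nonneg.2 hloℓ)) (mul_nonneg (hlo.le.trans hloℓ) hgap)))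
    (by positivity)

theorem stmt2_single_LMI_implies_coupled_LMIs_general
    (n p N : ℕ) (hN : 2 ≤ N)
    (A : Matrix (Fin n) (Fin n) ℝ)
    (B₁ : Matrix (Fin n) (Fin p) ℝ)
    (B₂ : Matrix (Fin n) (Fin n) ℝ)
    -- the graph, pinning matrix and spectral data
    (lam : Fin N → ℝ) (hlampos : ∀ i, 0 < lam i)
    (pc : Fin N → ℝ)
    (qsq : Fin N → ℝ)
    (psqmax qsqmax lamlo lamhi : ℝ)
    (hpsqmax : IsGreatest (Set.range fun i => (pc i) ^ 2) psqmax)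
    (hqsqmax : IsGreatest (Set.range qsq) qsqmax)
    (hlamlo : IsLeast (Set.range lam) lamlo)
    (hlamhi : IsGreatest (Set.range lam) lamhi)
    -- weights and LMI variables
    (Q : Matrix (Fin n) (Fin n) ℝ) (hQ : Q.PosDef)
    (R : Matrix (Fin p) (Fin p) ℝ) (hR : R.PosDef)
    (Y : Matrix (Fin n) (Fin n) ℝ) (hY : Y.PosDef)
    (π θ : ℝ) (hπ : 0 < π) (hθ : 0 < θ)
    -- feasibility of the single 4×4 block LMI of Theorem 2
    (hLMI : (-(Matrix.fromBlocks
        (A * Y + Y * Aᵀ - (lamlo ^ 2 / lamhi ^ 2) • (B₁ * R⁻¹ * B₁ᵀ)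
          + (psqmax / π + qsqmax / θ) • (B₂ * B₂ᵀ))
        (Matrix.fromCols (Y * (Real.sqrt lamhi • hQ.posSemidef.sqrt))
          (Matrix.fromCols Y Y))
        (Matrix.fromRows ((Real.sqrt lamhi • hQ.posSemidef.sqrt) * Y)
          (Matrix.fromRows Y Y))
        (Matrix.fromBlocks (-1) 0 0
          (Matrix.fromBlocks (-(π⁻¹ • (1 : Matrix (Fin n) (Fin n) ℝ))) 0 0
            (-((((N : ℝ) - 1) * θ)⁻¹ • (1 : Matrix (Fin n) (Fin n) ℝ))))))).PosDef)
    (F : Matrix (Fin p) (Fin n) ℝ)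
    (hF : F = -((lamlo / lamhi ^ 2) • (R⁻¹ * B₁ᵀ))) :
    -- all N of the 5×5 block LMIs of Theorem 1 hold with π_i = π and θ_i = θ
    ∀ i : Fin N,
      (-(Matrix.fromBlocks
        (A * Y + Y * Aᵀ + lam i • (Fᵀ * B₁ᵀ) + lam i • (B₁ * F)
          + (π⁻¹ * (pc i) ^ 2 + θ⁻¹ * qsq i) • (B₂ * B₂ᵀ))
        (Matrix.fromCols Fᵀ
          (Matrix.fromCols (Y * (Real.sqrt (lam i) • hQ.posSemidef.sqrt))
            (Matrix.fromCols Y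
              (Matrix.of fun c (x : {j : Fin N // j ≠ i} × Fin n) => Y c x.2))))
        (Matrix.fromRows F
          (Matrix.fromRows ((Real.sqrt (lam i) • hQ.posSemidef.sqrt) * Y)
            (Matrix.fromRows Y
              (Matrix.of fun (x : {j : Fin N // j ≠ i} × Fin n) c => Y x.2 c))))
        (Matrix.fromBlocks (-(((lam i) ^ 2)⁻¹ • R⁻¹)) 0 0
          (Matrix.fromBlocks (-1) 0 0
            (Matrix.fromBlocks (-(π⁻¹ • (1 : Matrix (Fin n) (Fin n) ℝ))) 0 0
              (-(Matrix.diagonal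
                  (fun _ : {j : Fin N // j ≠ i} × Fin n => θ⁻¹)))))))).PosDef := by
  obtain ⟨⟨ilo, rfl⟩, hlo⟩ := hlamlo
  obtain ⟨⟨ihi, rfl⟩, hhi⟩ := hlamhi
  have hYsymm : Y.IsSymm := isHermitian_iff_isSymm.1 hY.1
  have hsqrt : hQ.posSemidef.sqrt.IsSymm :=
    isHermitian_iff_isSymm.1 hQ.posSemidef.isHermitian_sqrt
  have hN₁ : 0 < ((N : ℝ) - 1) * θ :=
    mul_pos (by linarith [(Nat.ofNat_le_cast.2 hN : (2 : ℝ) ≤ N)]) hθ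
  rw [neg_singleLMI_posDef_iff hYsymm (hsqrt.smul _) hπ hN₁,
    hQ.posSemidef.smul_sqrt_mul_self (hlampos ihi).le] at hLMI
  intro i
  have hcard : (Fintype.card {j : Fin N // j ≠ i} : ℝ) = N - 1 := by
    rw [Fintype.card_subtype_compl, Fintype.card_fin, Fintype.card_unique,
      Nat.cast_sub (by omega), Nat.cast_one]
  rw [neg_coupledLMI_posDef_iff hR hYsymm (hsqrt.smul _) (hlampos i).ne' hπ hθ,
    hQ.posSemidef.smul_sqrt_mul_self (hlampos i).le, hcard]
  refine hLMI.neg_of_sub_posSemidef ?_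
  have hgain := sq_div_sq_le_two_mul_sub_sq (hlampos ilo) (hlo ⟨i, rfl⟩) (hhi ⟨i, rfl⟩)
  have hnoise : π⁻¹ * pc i ^ 2 + θ⁻¹ * qsq i ≤ psqmax / π + qsqmax / θ := by
    rw [div_eq_inv_mul, div_eq_inv_mul]
    gcongr
    exacts [hpsqmax.2 ⟨i, rfl⟩, hqsqmax.2 ⟨i, rfl⟩]
  convert (((hR.inv.posSemidef.mul_mul_transpose_same B₁).smul (sub_nonneg.2 hgain)).add
    ((PosSemidef.one.mul_mul_transpose_same B₂).smul (sub_nonneg.2 hnoise))).add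
    ((hQ.posSemidef.mul_mul_transpose_same Y).smul (sub_nonneg.2 (hhi ⟨i, rfl⟩))) using 1
  rw [hF, mul_neg_smul_inv_mul_transpose, neg_smul_inv_mul_transpose_transpose_mul
    (isHermitian_iff_isSymm.1 hR.1), neg_smul_inv_mul_transpose_transpose_mul_mul_self hR]
  simp only [hYsymm.eq, Matrix.mul_one, Matrix.mul_smul, Matrix.smul_mul]
  module

/-- Lemma 3. If the single 4×4 block LMI of Theorem 2 is feasible with
`Y > 0`, `π > 0`, `θ > 0`, then `F = -(λ̲/λ̄²) R⁻¹B₁'`, `π_i = π`, `θ_i = θ` together with the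
same `Y` satisfy all `N` of the 5×5 block LMIs of Theorem 1. -/
theorem stmt2_single_LMI_implies_coupled_LMIs
    (n p N : ℕ) (hN : 2 ≤ N)
    (A : Matrix (Fin n) (Fin n) ℝ)
    (B₁ : Matrix (Fin n) (Fin p) ℝ)
    (B₂ : Matrix (Fin n) (Fin n) ℝ)
    -- the graph, pinning matrix and spectral data
    (a : Fin N → Fin N → ℝ)
    (hsymm : ∀ i j, a i j = a j i)
    (hdiaga : ∀ i, a i i = 0)
    (h01 : ∀ i j, a i j = 0 ∨ a i j = 1)
    (hconn : ∀ i j : Fin N, Relation.ReflTransGen (fun u v => a u v = 1) i j)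
    (g : Fin N → ℝ) (hg01 : ∀ i, g i = 0 ∨ g i = 1) (hgne : ∃ i, g i = 1)
    (L : Matrix (Fin N) (Fin N) ℝ)
    (hL : L = Matrix.diagonal (fun i => ∑ j, a i j) - Matrix.of a)
    (G : Matrix (Fin N) (Fin N) ℝ) (hG : G = Matrix.diagonal g)
    (lam : Fin N → ℝ) (hlampos : ∀ i, 0 < lam i)
    (T : Matrix (Fin N) (Fin N) ℝ)
    (hT : T * Tᵀ = 1)
    (hTdiag : Tᵀ * (L + G) * T = Matrix.diagonal lam)
    (f : Fin N → Fin N → ℝ) (hf : f = fun i j => (Tᵀ * G * T) i j)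
    (pc : Fin N → ℝ) (hpc : pc = fun i => f i i - lam i)
    (qsq : Fin N → ℝ) (hqsq : qsq = fun i => ∑ j ∈ Finset.univ.erase i, (f i j) ^ 2)
    (psqmax qsqmax lamlo lamhi : ℝ)
    (hpsqmax : IsGreatest (Set.range fun i => (pc i) ^ 2) psqmax)
    (hqsqmax : IsGreatest (Set.range qsq) qsqmax)
    (hlamlo : IsLeast (Set.range lam) lamlo)
    (hlamhi : IsGreatest (Set.range lam) lamhi)
    -- weights and LMI variables
    (Q : Matrix (Fin n) (Fin n) ℝ) (hQ : Q.PosDef)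
    (R : Matrix (Fin p) (Fin p) ℝ) (hR : R.PosDef)
    (Y : Matrix (Fin n) (Fin n) ℝ) (hY : Y.PosDef)
    (π θ : ℝ) (hπ : 0 < π) (hθ : 0 < θ)
    -- feasibility of the single 4×4 block LMI of Theorem 2
    (hLMI : (-(Matrix.fromBlocks
        (A * Y + Y * Aᵀ - (lamlo ^ 2 / lamhi ^ 2) • (B₁ * R⁻¹ * B₁ᵀ)
          + (psqmax / π + qsqmax / θ) • (B₂ * B₂ᵀ))
        (Matrix.fromCols (Y * (Real.sqrt lamhi • hQ.posSemidef.sqrt))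
          (Matrix.fromCols Y Y))
        (Matrix.fromRows ((Real.sqrt lamhi • hQ.posSemidef.sqrt) * Y)
          (Matrix.fromRows Y Y))
        (Matrix.fromBlocks (-1) 0 0
          (Matrix.fromBlocks (-(π⁻¹ • (1 : Matrix (Fin n) (Fin n) ℝ))) 0 0
            (-((((N : ℝ) - 1) * θ)⁻¹ • (1 : Matrix (Fin n) (Fin n) ℝ))))))).PosDef)
    (F : Matrix (Fin p) (Fin n) ℝ)
    (hF : F = -((lamlo / lamhi ^ 2) • (R⁻¹ * B₁ᵀ))) :
    -- all N of the 5×5 block LMIs of Theorem 1 hold with π_i = π and θ_i = θ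
    ∀ i : Fin N,
      (-(Matrix.fromBlocks
        (A * Y + Y * Aᵀ + lam i • (Fᵀ * B₁ᵀ) + lam i • (B₁ * F)
          + (π⁻¹ * (pc i) ^ 2 + θ⁻¹ * qsq i) • (B₂ * B₂ᵀ))
        (Matrix.fromCols Fᵀ
          (Matrix.fromCols (Y * (Real.sqrt (lam i) • hQ.posSemidef.sqrt))
            (Matrix.fromCols Y
              (Matrix.of fun c (x : {j : Fin N // j ≠ i} × Fin n) => Y c x.2))))
        (Matrix.fromRows F
          (Matrix.fromRows ((Real.sqrt (lam i) • hQ.posSemidef.sqrt) * Y)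
            (Matrix.fromRows Y
              (Matrix.of fun (x : {j : Fin N // j ≠ i} × Fin n) c => Y x.2 c))))
        (Matrix.fromBlocks (-(((lam i) ^ 2)⁻¹ • R⁻¹)) 0 0
          (Matrix.fromBlocks (-1) 0 0
            (Matrix.fromBlocks (-(π⁻¹ • (1 : Matrix (Fin n) (Fin n) ℝ))) 0 0
              (-(Matrix.diagonal
                  (fun _ : {j : Fin N // j ≠ i} × Fin n => θ⁻¹)))))))).PosDef :=
  stmt2_single_LMI_implies_coupled_LMIs_general n p N hN A B₁ B₂ lam hlampos pc qsq psqmax qsqmax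
    lamlo lamhi hpsqmax hqsqmax hlamlo hlamhi Q hQ R hR Y hY π θ hπ hθ hLMI F hF
end

section
/- Fix e⁰ ∈ ℝ^{Nn}, a gain K ∈ ℝ^{p×n}, and a constant c > 0, and let ε⁰ = (T^{-1}⊗I_n) e⁰ with blocks ε⁰_i ∈ ℝⁿ. Suppose that for every collection of locally square-integrable inputs ξ_i : [0,∞) → ℝⁿ and η_i : [0,∞) → ℝ^{(N−1)n} (i = 1,…,N) for which there exist a sequence t_l → ∞ and d > 0 with ∫₀^{t_l}‖ξ_i(t)‖² dt ≤ ∫₀^{t_l}‖ε_i(t)‖² dt + d and ∫₀^{t_l}‖η_i(t)‖² dt ≤ ∫₀^{t_l}∑_{j≠i}‖ε_j(t)‖² dt + (N−1)d for all i and l, every solution of the interconnected system ε̇_i = A ε_i + λ_i B₁ K ε_i + E_i ξ_i + L_i η_i with ε_i(0) = ε⁰_i satisfies Ĵ = ∑_{i=1}^N ∫₀^∞ (λ_i ε_i' Q ε_i + λ_i² ε_i' K' R K ε_i) dt < c. Then for every linear operator φ in the class Ξ₀ with constant d > 0, every solution e of the closed-loop error dynamics ė = (I_N⊗A)e + ((ℒ+G)⊗(B₁K))e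 − ((ℒ+G)⊗B₂)Φ(t) + (G⊗B₂)Φ(t) with e(0) = e⁰, where Φ(t) stacks (φ e_i)(t), satisfies J(u) < c, where J(u) = ∑_{i=1}^N ∫₀^∞ ( (1/2)∑_{j∈N_i}(e_i−e_j)'Q(e_i−e_j) + g_i e_i'Q e_i + u_i'R u_i ) dt and u_i = −K(∑_j a_{ij}(e_i − e_j) + g_i e_i). -/
open Matrix Kronecker MeasureTheory Filter

/-!
With `ε = (Tᵀ ⊗ I) e`, the relation `Tᵀ (ℒ + G) = Λ Tᵀ` and the intertwining
`(Tᵀ ⊗ I)(X ⊗ B) = (Y ⊗ B)(Tᵀ ⊗ I)` whenever `Tᵀ X = Y Tᵀ` decouple the closed-loop error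
dynamics: block `i` of `ε` solves the auxiliary equation with inputs `ξᵢ = φ εᵢ` and
`ηᵢ = (φ εⱼ)_{j ≠ i}`, because by linearity `φ` commutes with mixing the blocks of `e`.
The class `Ξ₀` inequality, applied to each `εⱼ`, gives both IQCs. The same orthogonal change of
variables identifies the integrands pointwise: `∑ᵢ λᵢ εᵢ'Qεᵢ = e'((ℒ+G) ⊗ Q)e` is the graph
quadratic form of `J`, and `∑ᵢ λᵢ² εᵢ'K'RKεᵢ = e'((ℒ+G)² ⊗ K'RK)e = ∑ᵢ uᵢ'Ruᵢ`.
Hence `J(u) = Ĵ < c`, and each summand of `J` is integrable because all of them are nonnegative.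
-/

section Kronecker
variable {R : Type*} [CommSemiring R] {ι ι' m m' : Type*} [Fintype ι'] [Fintype m']

theorem kronecker_mulVec_block (M : Matrix ι ι' R) (B : Matrix m m' R) (v : ι' × m' → R)
    (i : ι) :
    (fun b => ((M ⊗ₖ B) *ᵥ v) (i, b)) = ∑ j, M i j • B *ᵥ fun c => v (j, c) := by
  ext b
  simp only [mulVec, dotProduct, Fintype.sum_prod_type, kroneckerMap_apply, Finset.sum_apply,
    Pi.smul_apply, smul_eq_mul, Finset.mul_sum]
  exact Finset.sum_congr rfl fun j _ => Finset.sum_congr rfl fun c _ => by ring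

theorem diagonal_kronecker_mulVec_block [DecidableEq ι'] (μ : ι' → R) (B : Matrix m m' R)
    (v : ι' × m' → R) (i : ι') :
    (fun b => ((diagonal μ ⊗ₖ B) *ᵥ v) (i, b)) = μ i • B *ᵥ fun c => v (i, c) := by
  rw [kronecker_mulVec_block, Finset.sum_eq_single i, diagonal_apply_eq]
  · intro j _ hji
    rw [diagonal_apply_ne _ hji.symm, zero_smul]
  · simp

theorem one_kronecker_mulVec_block [DecidableEq ι'] (B : Matrix m m' R) (v : ι' × m' → R)
    (i : ι') :
    (fun b => ((1 ⊗ₖ B : Matrix (ι' × m) (ι' × m') R) *ᵥ v) (i, b)) = B *ᵥ fun c => v (i, c) := by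
  rw [← diagonal_one, diagonal_kronecker_mulVec_block, one_smul]

theorem kronecker_one_mulVec_kronecker_mulVec [DecidableEq m'] {P X Y : Matrix ι' ι' R}
    (h : P * X = Y * P) (B : Matrix m' m' R) (v : ι' × m' → R) :
    (P ⊗ₖ (1 : Matrix m' m' R)) *ᵥ ((X ⊗ₖ B) *ᵥ v) = (Y ⊗ₖ B) *ᵥ ((P ⊗ₖ 1) *ᵥ v) := by
  rw [mulVec_mulVec, mulVec_mulVec, ← mul_kronecker_mul, ← mul_kronecker_mul, h, one_mul,
    mul_one]

theorem dotProduct_kronecker_mulVec [Fintype ι] [Fintype m] (M : Matrix ι ι' R)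
    (B : Matrix m m' R) (v : ι × m → R) (w : ι' × m' → R) :
    v ⬝ᵥ (M ⊗ₖ B) *ᵥ w = ∑ i, ∑ j, M i j * ((fun b => v (i, b)) ⬝ᵥ B *ᵥ fun c => w (j, c)) := by
  rw [dotProduct, Fintype.sum_prod_type]
  refine Finset.sum_congr rfl fun i _ => ?_
  have h := congrArg (fun u => (fun b => v (i, b)) ⬝ᵥ u) (kronecker_mulVec_block M B w i)
  simp only [dotProduct_sum, dotProduct_smul, smul_eq_mul] at h
  exact h

theorem dotProduct_diagonal_kronecker_mulVec [Fintype m] [DecidableEq ι'] (μ : ι' → R)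
    (B : Matrix m m' R) (v : ι' × m → R) (w : ι' × m' → R) :
    v ⬝ᵥ (diagonal μ ⊗ₖ B) *ᵥ w
      = ∑ i, μ i * ((fun b => v (i, b)) ⬝ᵥ B *ᵥ fun c => w (i, c)) := by
  rw [dotProduct, Fintype.sum_prod_type]
  refine Finset.sum_congr rfl fun i _ => ?_
  have h := congrArg (fun u => (fun b => v (i, b)) ⬝ᵥ u) (diagonal_kronecker_mulVec_block μ B w i)
  simp only [dotProduct_smul, smul_eq_mul] at h
  exact h

theorem dotProduct_kronecker_one_mulVec_conj [Fintype ι] [Fintype m] [DecidableEq m]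
    (P : Matrix ι' ι R) (X : Matrix ι' ι' R) (B : Matrix m m R) (v : ι × m → R) :
    ((P ⊗ₖ (1 : Matrix m m R)) *ᵥ v) ⬝ᵥ (X ⊗ₖ B) *ᵥ ((P ⊗ₖ 1) *ᵥ v)
      = v ⬝ᵥ ((Pᵀ * X * P) ⊗ₖ B) *ᵥ v := by
  rw [mulVec_mulVec, ← vecMul_transpose, ← dotProduct_mulVec, mulVec_mulVec,
    ← kroneckerMap_transpose, transpose_one, ← mul_kronecker_mul, ← mul_kronecker_mul, mul_one,
    one_mul, Matrix.mul_assoc]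

end Kronecker

section Orthogonal
variable {R ι : Type*} [CommRing R] [Fintype ι] [DecidableEq ι] {T : Matrix ι ι R}

theorem transpose_mul_eq_conj_mul_transpose (hT : T * Tᵀ = 1) (X : Matrix ι ι R) :
    Tᵀ * X = Tᵀ * X * T * Tᵀ := by
  rw [Matrix.mul_assoc _ T, hT, Matrix.mul_one]

theorem mul_mul_transpose_of_conj_eq (hT : T * Tᵀ = 1) {X D : Matrix ι ι R}
    (h : Tᵀ * X * T = D) : T * D * Tᵀ = X := by
  rw [← h]
  simp only [Matrix.mul_assoc]
  rw [hT, Matrix.mul_one, ← Matrix.mul_assoc, hT, Matrix.one_mul]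

theorem mul_sq_mul_transpose_of_conj_eq (hT : T * Tᵀ = 1) {X D : Matrix ι ι R}
    (h : Tᵀ * X * T = D) : T * (D * D) * Tᵀ = X * X := by
  have hTT : Tᵀ * T = 1 := mul_eq_one_comm.mp hT
  rw [← mul_mul_transpose_of_conj_eq hT h]
  simp only [Matrix.mul_assoc]
  rw [← Matrix.mul_assoc Tᵀ T, hTT, Matrix.one_mul]

end Orthogonal

theorem neg_mulVec_dotProduct_mulVec_neg_mulVec {R m k : Type*} [CommRing R] [Fintype m]
    [Fintype k] (Q : Matrix k k R) (K : Matrix k m R) (z : m → R) :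
    (-(K *ᵥ z)) ⬝ᵥ Q *ᵥ (-(K *ᵥ z)) = z ⬝ᵥ (Kᵀ * Q * K) *ᵥ z := by
  rw [neg_dotProduct, mulVec_neg, dotProduct_neg, neg_neg, Matrix.mul_assoc, ← mulVec_mulVec,
    dotProduct_mulVec z, vecMul_transpose, ← mulVec_mulVec]

section PinnedLaplacian
variable {ι m : Type*} [Fintype ι] [DecidableEq ι]

def pinnedLaplacian {R : Type*} [Ring R] (a : ι → ι → R) (g : ι → R) : Matrix ι ι R :=
  diagonal (fun i => ∑ j, a i j) - of a + diagonal g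

theorem pinnedLaplacian_transpose {R : Type*} [Ring R] {a : ι → ι → R} (g : ι → R)
    (hsymm : ∀ i j, a i j = a j i) : (pinnedLaplacian a g)ᵀ = pinnedLaplacian a g := by
  have : (of a)ᵀ = of a := by ext i j; exact hsymm j i
  rw [pinnedLaplacian, transpose_add, transpose_sub, diagonal_transpose, diagonal_transpose, this]

theorem pinnedLaplacian_kronecker_one_mulVec_block {R : Type*} [CommRing R] [Fintype m]
    [DecidableEq m] (a : ι → ι → R) (g : ι → R) (v : ι × m → R) (i : ι) :
    (fun b => ((pinnedLaplacian a g ⊗ₖ (1 : Matrix m m R)) *ᵥ v) (i, b))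
      = ∑ j, a i j • ((fun b => v (i, b)) - fun b => v (j, b)) + g i • fun b => v (i, b) := by
  rw [kronecker_mulVec_block]
  ext b
  simp only [pinnedLaplacian, one_mulVec, Finset.sum_apply, Pi.add_apply, Pi.smul_apply,
    Pi.sub_apply, smul_eq_mul, Matrix.add_apply, Matrix.sub_apply, diagonal_apply, of_apply,
    add_mul, sub_mul, ite_mul, zero_mul, Finset.sum_add_distrib, Finset.sum_sub_distrib,
    Finset.sum_ite_eq, Finset.mem_univ, if_true, mul_sub, Finset.sum_mul]

variable {a : ι → ι → ℝ} (g : ι → ℝ)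

theorem sum_pinnedLaplacian_mul (hsymm : ∀ i j, a i j = a j i) (q : ι → ι → ℝ) :
    ∑ i, ∑ j, pinnedLaplacian a g i j * q i j
      = ∑ i, ((1 / 2) * ∑ j, a i j * (q i i - q i j - q j i + q j j) + g i * q i i) := by
  have swap (r : ι → ι → ℝ) : ∑ i, ∑ j, a i j * r j i = ∑ i, ∑ j, a i j * r i j := by
    rw [Finset.sum_comm]
    exact Finset.sum_congr rfl fun i _ => Finset.sum_congr rfl fun j _ => by rw [hsymm]
  have hqjj := swap fun i _ => q i i
  have hqji := swap q
  simp only [pinnedLaplacian, Matrix.add_apply, Matrix.sub_apply, diagonal_apply, of_apply,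
    add_mul, sub_mul, ite_mul, zero_mul, Finset.sum_add_distrib, Finset.sum_sub_distrib,
    Finset.sum_ite_eq, Finset.mem_univ, if_true, mul_add, mul_sub, ← Finset.mul_sum,
    Finset.sum_mul]
  linarith

theorem dotProduct_pinnedLaplacian_kronecker_mulVec [Fintype m] (hsymm : ∀ i j, a i j = a j i)
    (Q : Matrix m m ℝ) (v : ι × m → ℝ) :
    v ⬝ᵥ (pinnedLaplacian a g ⊗ₖ Q) *ᵥ v
      = ∑ i, ((1 / 2) * ∑ j, a i j *
            (((fun b => v (i, b)) - fun b => v (j, b)) ⬝ᵥ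
              Q *ᵥ ((fun b => v (i, b)) - fun b => v (j, b)))
          + g i * ((fun b => v (i, b)) ⬝ᵥ Q *ᵥ fun b => v (i, b))) := by
  rw [dotProduct_kronecker_mulVec, sum_pinnedLaplacian_mul g hsymm]
  refine Finset.sum_congr rfl fun i _ => ?_
  congr 2
  refine Finset.sum_congr rfl fun j _ => ?_
  rw [mulVec_sub, sub_dotProduct, dotProduct_sub, dotProduct_sub]
  ring

end PinnedLaplacian

section TrackingCost
variable {ι m k : Type*} [Fintype ι] [DecidableEq ι] [Fintype m] [DecidableEq m] [Fintype k]

noncomputable def trackingCost (a : ι → ι → ℝ) (g : ι → ℝ) (Q : Matrix m m ℝ) (R : Matrix k k ℝ)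
    (K : Matrix k m ℝ) (v : ι × m → ℝ) (i : ι) : ℝ :=
  (1 / 2) * ∑ j, a i j *
      (((fun b => v (i, b)) - fun b => v (j, b)) ⬝ᵥ
        Q.mulVec ((fun b => v (i, b)) - fun b => v (j, b)))
  + g i * ((fun b => v (i, b)) ⬝ᵥ Q.mulVec (fun b => v (i, b)))
  + (-(K.mulVec (∑ j, a i j • ((fun b => v (i, b)) - fun b => v (j, b))
        + g i • fun b => v (i, b)))) ⬝ᵥ
      R.mulVec
        (-(K.mulVec (∑ j, a i j • ((fun b => v (i, b)) - fun b => v (j, b))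
          + g i • fun b => v (i, b))))

omit [DecidableEq ι] [DecidableEq m] in
theorem continuous_trackingCost (a : ι → ι → ℝ) (g : ι → ℝ) (Q : Matrix m m ℝ)
    (R : Matrix k k ℝ) (K : Matrix k m ℝ) (i : ι) :
    Continuous fun v => trackingCost a g Q R K v i := by
  unfold trackingCost; fun_prop

variable {a : ι → ι → ℝ} {g : ι → ℝ} {Q : Matrix m m ℝ} {R : Matrix k k ℝ}

omit [DecidableEq ι] [DecidableEq m] in
theorem trackingCost_nonneg (ha : ∀ i j, 0 ≤ a i j) (hg : ∀ i, 0 ≤ g i) (hQ : Q.PosSemidef)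
    (hR : R.PosSemidef) (K : Matrix k m ℝ) (v : ι × m → ℝ) (i : ι) :
    0 ≤ trackingCost a g Q R K v i := by
  have hQx (x : m → ℝ) : 0 ≤ x ⬝ᵥ Q *ᵥ x := by simpa using hQ.dotProduct_mulVec_nonneg x
  have hRx (x : k → ℝ) : 0 ≤ x ⬝ᵥ R *ᵥ x := by simpa using hR.dotProduct_mulVec_nonneg x
  refine add_nonneg (add_nonneg ?_ (mul_nonneg (hg i) (hQx _))) (hRx _)
  exact mul_nonneg (by norm_num) (Finset.sum_nonneg fun j _ => mul_nonneg (ha i j) (hQx _))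

theorem sum_trackingCost_eq_sum_diagonalized (hsymm : ∀ i j, a i j = a j i) (K : Matrix k m ℝ)
    {T : Matrix ι ι ℝ} {lam : ι → ℝ} (hT : T * Tᵀ = 1)
    (hTdiag : Tᵀ * pinnedLaplacian a g * T = diagonal lam) (v : ι × m → ℝ) :
    ∑ i, trackingCost a g Q R K v i
      = ∑ i, (lam i * ((fun b => ((Tᵀ ⊗ₖ 1) *ᵥ v) (i, b)) ⬝ᵥ
                Q *ᵥ fun b => ((Tᵀ ⊗ₖ 1) *ᵥ v) (i, b))
            + lam i ^ 2 * ((fun b => ((Tᵀ ⊗ₖ 1) *ᵥ v) (i, b)) ⬝ᵥ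
                (Kᵀ * R * K) *ᵥ fun b => ((Tᵀ ⊗ₖ 1) *ᵥ v) (i, b))) := by
  set M := pinnedLaplacian a g
  have hsq : diagonal (fun i => lam i ^ 2) = diagonal lam * diagonal lam := by
    rw [diagonal_mul_diagonal]; simp only [sq]
  have hM2 : T * diagonal (fun i => lam i ^ 2) * Tᵀ = Mᵀ * 1 * M := by
    rw [hsq, mul_sq_mul_transpose_of_conj_eq hT hTdiag, Matrix.mul_one,
      pinnedLaplacian_transpose g hsymm]
  rw [Finset.sum_add_distrib, ← dotProduct_diagonal_kronecker_mulVec,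
    ← dotProduct_diagonal_kronecker_mulVec, dotProduct_kronecker_one_mulVec_conj,
    dotProduct_kronecker_one_mulVec_conj, transpose_transpose,
    mul_mul_transpose_of_conj_eq hT hTdiag, hM2, ← dotProduct_kronecker_one_mulVec_conj,
    ← diagonal_one (n := ι) (α := ℝ), dotProduct_diagonal_kronecker_mulVec,
    dotProduct_pinnedLaplacian_kronecker_mulVec g hsymm, ← Finset.sum_add_distrib]
  refine Finset.sum_congr rfl fun i _ => ?_
  rw [trackingCost, neg_mulVec_dotProduct_mulVec_neg_mulVec,
    ← pinnedLaplacian_kronecker_one_mulVec_block, one_mul]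

end TrackingCost

section Blocks
variable {R ι m : Type*} [CommRing R] [Fintype ι] [DecidableEq ι] [Fintype m] [DecidableEq m]

omit [DecidableEq m] in
theorem sum_subtype_ne_prod {M : Type*} [AddCommMonoid M] (i : ι) (F : ι → m → M) :
    ∑ x : {j // j ≠ i} × m, F x.1 x.2 = ∑ j ∈ Finset.univ.erase i, ∑ b, F j b := by
  rw [Fintype.sum_prod_type]
  exact (Finset.sum_subtype _ (fun j => by simp) fun j => ∑ b, F j b).symm

omit [DecidableEq ι] in
theorem block_kronecker_one_mulVec_map {τ : Type*}
    (φ : (τ → m → R) →ₗ[R] (τ → m → R)) (P : Matrix ι ι R) (e : τ → ι × m → R) (t : τ) (i : ι) :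
    (fun b => ((P ⊗ₖ (1 : Matrix m m R)) *ᵥ fun x => φ (fun s c => e s (x.1, c)) t x.2) (i, b))
      = φ (fun s b => ((P ⊗ₖ (1 : Matrix m m R)) *ᵥ e s) (i, b)) t := by
  have hblock : (fun s b => ((P ⊗ₖ (1 : Matrix m m R)) *ᵥ e s) (i, b))
      = ∑ j, P i j • fun s c => e s (j, c) := by
    funext s
    rw [kronecker_mulVec_block]
    simp [Finset.sum_apply]
  rw [kronecker_mulVec_block, hblock, map_sum]
  ext b
  simp [Finset.sum_apply]

theorem block_kronecker_transform_closedLoop {A BK B₂ : Matrix m m R}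
    {M G F T : Matrix ι ι R} {lam : ι → R} (hM : Tᵀ * M = diagonal lam * Tᵀ)
    (hG : Tᵀ * G = F * Tᵀ) (v w : ι × m → R) (i : ι) :
    (fun b => ((Tᵀ ⊗ₖ (1 : Matrix m m R)) *ᵥ ((1 ⊗ₖ A) *ᵥ v + (M ⊗ₖ BK) *ᵥ v
        - (M ⊗ₖ B₂) *ᵥ w + (G ⊗ₖ B₂) *ᵥ w)) (i, b))
      = A *ᵥ (fun b => ((Tᵀ ⊗ₖ 1) *ᵥ v) (i, b)) + lam i • BK *ᵥ (fun b => ((Tᵀ ⊗ₖ 1) *ᵥ v) (i, b))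
        + (F i i - lam i) • B₂ *ᵥ (fun b => ((Tᵀ ⊗ₖ 1) *ᵥ w) (i, b))
        + ∑ j ∈ Finset.univ.erase i, F i j • B₂ *ᵥ (fun b => ((Tᵀ ⊗ₖ 1) *ᵥ w) (j, b)) := by
  have h1 : Tᵀ * 1 = 1 * Tᵀ := by rw [Matrix.mul_one, Matrix.one_mul]
  rw [mulVec_add, mulVec_sub, mulVec_add, kronecker_one_mulVec_kronecker_mulVec h1,
    kronecker_one_mulVec_kronecker_mulVec hM, kronecker_one_mulVec_kronecker_mulVec hM,
    kronecker_one_mulVec_kronecker_mulVec hG]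
  set x := (Tᵀ ⊗ₖ (1 : Matrix m m R)) *ᵥ v
  set y := (Tᵀ ⊗ₖ (1 : Matrix m m R)) *ᵥ w
  ext b
  have hA := congrFun (one_kronecker_mulVec_block A x i) b
  have hBK := congrFun (diagonal_kronecker_mulVec_block lam BK x i) b
  have hB₂ := congrFun (diagonal_kronecker_mulVec_block lam B₂ y i) b
  have hF := congrFun (kronecker_mulVec_block F B₂ y i) b
  rw [← Finset.add_sum_erase _ _ (Finset.mem_univ i)] at hF
  simp only [Pi.add_apply, Pi.sub_apply, Pi.smul_apply, smul_eq_mul, Finset.sum_apply]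
    at hA hBK hB₂ hF ⊢
  rw [hA, hBK, hB₂, hF]
  ring

omit [DecidableEq m] in
theorem of_mulVec_subtype_ne (f : ι → ι → R) (B : Matrix m m R) (w : ι → m → R) (i : ι) :
    (of fun b (x : {j // j ≠ i} × m) => f i x.1 * B b x.2) *ᵥ (fun x => w x.1 x.2)
      = ∑ j ∈ Finset.univ.erase i, f i j • B *ᵥ w j := by
  ext b
  simp only [mulVec, dotProduct, of_apply, Finset.sum_apply, Pi.smul_apply, smul_eq_mul,
    Finset.mul_sum]
  rw [sum_subtype_ne_prod i fun j c => f i j * B b c * w j c]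
  exact Finset.sum_congr rfl fun j _ => Finset.sum_congr rfl fun c _ => by ring

omit [DecidableEq m] in
theorem dotProduct_subtype_ne (w : ι → m → R) (i : ι) :
    (fun x : {j // j ≠ i} × m => w x.1 x.2) ⬝ᵥ (fun x => w x.1 x.2)
      = ∑ j ∈ Finset.univ.erase i, w j ⬝ᵥ w j :=
  sum_subtype_ne_prod i fun j c => w j c * w j c

end Blocks

theorem HasDerivWithinAt.matrix_mulVec {m n : Type*} [Fintype m] [Fintype n] {f : ℝ → n → ℝ}
    {f' : n → ℝ} {s : Set ℝ} {t : ℝ} (M : Matrix m n ℝ)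
    (h : HasDerivWithinAt f f' s t) : HasDerivWithinAt (fun t => M *ᵥ f t) (M *ᵥ f') s t :=
  (mulVecLin M).toContinuousLinearMap.hasFDerivAt.comp_hasDerivWithinAt t h

theorem HasDerivWithinAt.kronecker_transform_closedLoop {ι m : Type*} [Fintype ι]
    [DecidableEq ι] [Fintype m] [DecidableEq m] {A BK B₂ : Matrix m m ℝ}
    {M G F T : Matrix ι ι ℝ} {lam : ι → ℝ} (hM : Tᵀ * M = diagonal lam * Tᵀ)
    (hG : Tᵀ * G = F * Tᵀ) (φ : (ℝ → m → ℝ) →ₗ[ℝ] (ℝ → m → ℝ)) {e : ℝ → ι × m → ℝ}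
    {s : Set ℝ} {t : ℝ}
    (he : HasDerivWithinAt e
      ((1 ⊗ₖ A) *ᵥ e t + (M ⊗ₖ BK) *ᵥ e t
        - (M ⊗ₖ B₂) *ᵥ (fun x : ι × m => φ (fun s b => e s (x.1, b)) t x.2)
        + (G ⊗ₖ B₂) *ᵥ (fun x : ι × m => φ (fun s b => e s (x.1, b)) t x.2)) s t)
    (i : ι) :
    HasDerivWithinAt (fun t b => ((Tᵀ ⊗ₖ (1 : Matrix m m ℝ)) *ᵥ e t) (i, b))
      (A *ᵥ (fun b => ((Tᵀ ⊗ₖ 1) *ᵥ e t) (i, b))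
        + lam i • BK *ᵥ (fun b => ((Tᵀ ⊗ₖ 1) *ᵥ e t) (i, b))
        + (F i i - lam i) • B₂ *ᵥ φ (fun t b => ((Tᵀ ⊗ₖ 1) *ᵥ e t) (i, b)) t
        + ∑ j ∈ Finset.univ.erase i,
            F i j • B₂ *ᵥ φ (fun t b => ((Tᵀ ⊗ₖ 1) *ᵥ e t) (j, b)) t) s t := by
  have h := he.matrix_mulVec (Tᵀ ⊗ₖ (1 : Matrix m m ℝ))
  have hi := hasDerivWithinAt_pi.2 fun b => hasDerivWithinAt_pi.1 h (i, b)
  rw [block_kronecker_transform_closedLoop hM hG] at hi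
  simpa only [block_kronecker_one_mulVec_map] using hi

section L2e
variable {m : Type*} [Fintype m]

def MemL2e (y : ℝ → m → ℝ) : Prop :=
  ∀ T : ℝ, IntegrableOn (fun t => y t ⬝ᵥ y t) (Set.Ioc 0 T)

theorem ContinuousOn.memL2e {y : ℝ → m → ℝ} (hy : ContinuousOn y (Set.Ici 0)) : MemL2e y := by
  have hyy : ContinuousOn (fun t => y t ⬝ᵥ y t) (Set.Ici 0) := by fun_prop
  exact fun T => (hyy.mono Set.Icc_subset_Ici_self).integrableOn_compact isCompact_Icc
    |>.mono_set Set.Ioc_subset_Icc_self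

theorem MemL2e.intervalIntegrable {y : ℝ → m → ℝ} (hy : MemL2e y) {T : ℝ} (hT : 0 ≤ T) :
    IntervalIntegrable (fun t => y t ⬝ᵥ y t) volume 0 T :=
  (intervalIntegrable_iff_integrableOn_Ioc_of_le hT).2 (hy T)

theorem MemL2e.subtype_ne {ι : Type*} [Fintype ι] [DecidableEq ι] {w : ι → ℝ → m → ℝ}
    (hw : ∀ j, MemL2e (w j)) (i : ι) :
    MemL2e (fun t (x : {j // j ≠ i} × m) => w x.1 t x.2) := by
  intro T
  have hη (t : ℝ) : (fun x : {j // j ≠ i} × m => w x.1 t x.2) ⬝ᵥ (fun x => w x.1 t x.2)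
      = ∑ j ∈ Finset.univ.erase i, w j t ⬝ᵥ w j t :=
    dotProduct_subtype_ne (fun j => w j t) i
  simp only [hη]
  exact integrable_finsetSum _ fun j _ => hw j T

variable {φ : (ℝ → m → ℝ) → (ℝ → m → ℝ)} {tl : ℕ → ℝ} {d : ℝ}
  (hmap : ∀ y, MemL2e y → MemL2e (φ y))
  (hiqc : ∀ l y, MemL2e y →
    ∫ t in (0:ℝ)..tl l, φ y t ⬝ᵥ φ y t ≤ (∫ t in (0:ℝ)..tl l, y t ⬝ᵥ y t) + d)
include hmap hiqc

theorem intervalIntegral_sum_map_le_of_iqc (hd : 0 ≤ d) {ι : Type*} (s : Finset ι)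
    {y : ι → ℝ → m → ℝ} (hy : ∀ j, MemL2e (y j)) (l : ℕ) :
    ∫ t in (0:ℝ)..max (tl l) 0, ∑ j ∈ s, φ (y j) t ⬝ᵥ φ (y j) t
      ≤ (∫ t in (0:ℝ)..max (tl l) 0, ∑ j ∈ s, y j t ⬝ᵥ y j t) + s.card * d := by
  rcases le_total (tl l) 0 with hneg | hpos
  · simp only [max_eq_right hneg, intervalIntegral.integral_same, zero_add]
    positivity
  rw [max_eq_left hpos, intervalIntegral.integral_finsetSum
      fun j _ => (hmap _ (hy j)).intervalIntegrable hpos,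
    intervalIntegral.integral_finsetSum fun j _ => (hy j).intervalIntegrable hpos]
  calc ∑ j ∈ s, ∫ t in (0:ℝ)..tl l, φ (y j) t ⬝ᵥ φ (y j) t
      ≤ ∑ j ∈ s, ((∫ t in (0:ℝ)..tl l, y j t ⬝ᵥ y j t) + d) :=
        Finset.sum_le_sum fun j _ => hiqc l (y j) (hy j)
    _ = _ := by rw [Finset.sum_add_distrib, Finset.sum_const, nsmul_eq_mul]

-- Passing to `max tₗ 0` keeps `tₗ → ∞` and avoids negative horizons, on which nothing is
-- known to be integrable.
theorem exists_auxiliary_iqc (hd : 0 < d) (htl : Tendsto tl atTop atTop) {ι : Type*}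
    [Fintype ι] [DecidableEq ι] {ε : ι → ℝ → m → ℝ} (hε : ∀ i, MemL2e (ε i)) :
    ∃ (tl' : ℕ → ℝ) (d' : ℝ), Tendsto tl' atTop atTop ∧ 0 < d' ∧ ∀ l i,
      (∫ t in (0:ℝ)..tl' l, φ (ε i) t ⬝ᵥ φ (ε i) t)
          ≤ (∫ t in (0:ℝ)..tl' l, ε i t ⬝ᵥ ε i t) + d'
        ∧ (∫ t in (0:ℝ)..tl' l, (fun x : {j // j ≠ i} × m => φ (ε x.1) t x.2) ⬝ᵥ
              (fun x => φ (ε x.1) t x.2))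
          ≤ (∫ t in (0:ℝ)..tl' l, ∑ j ∈ Finset.univ.erase i, ε j t ⬝ᵥ ε j t)
            + ((Fintype.card ι : ℝ) - 1) * d' := by
  refine ⟨fun l => max (tl l) 0, d, tendsto_atTop_mono (fun l => le_max_left _ _) htl, hd,
    fun l i => ⟨?_, ?_⟩⟩
  · simpa using intervalIntegral_sum_map_le_of_iqc hmap hiqc hd.le {i} hε l
  · have hη (t : ℝ) : (fun x : {j // j ≠ i} × m => φ (ε x.1) t x.2) ⬝ᵥ
        (fun x => φ (ε x.1) t x.2) = ∑ j ∈ Finset.univ.erase i, φ (ε j) t ⬝ᵥ φ (ε j) t :=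
      dotProduct_subtype_ne (fun j => φ (ε j) t) i
    have hcard : ((Finset.univ.erase i).card : ℝ) = Fintype.card ι - 1 := by
      rw [Finset.card_erase_of_mem (Finset.mem_univ i), Finset.card_univ,
        Nat.cast_pred (Fintype.card_pos_iff.2 ⟨i⟩)]
    simpa only [hη, hcard] using
      intervalIntegral_sum_map_le_of_iqc hmap hiqc hd.le (Finset.univ.erase i) hε l

end L2e

theorem integrableOn_and_sum_integral_lt_of_sum_eq {ι : Type*} [Fintype ι] {J Ĵ : ι → ℝ → ℝ}
    {s : Set ℝ} {c : ℝ} (hJ_meas : ∀ i, AEStronglyMeasurable (J i) (volume.restrict s))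
    (hJ_nonneg : ∀ i t, 0 ≤ J i t) (hsum : ∀ t, ∑ i, J i t = ∑ i, Ĵ i t)
    (hĴ_int : ∀ i, IntegrableOn (Ĵ i) s) (hĴ_lt : ∑ i, ∫ t in s, Ĵ i t < c) :
    (∀ i, IntegrableOn (J i) s) ∧ ∑ i, ∫ t in s, J i t < c := by
  have hsum_int : IntegrableOn (fun t => ∑ i, J i t) s := by
    simp only [hsum]; exact integrable_finsetSum _ fun i _ => hĴ_int i
  have hJ_int : ∀ i, IntegrableOn (J i) s := fun i =>
    Integrable.mono hsum_int (hJ_meas i) <| Eventually.of_forall fun t => by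
      rw [Real.norm_of_nonneg (hJ_nonneg i t),
        Real.norm_of_nonneg (Finset.sum_nonneg fun j _ => hJ_nonneg j t)]
      exact Finset.single_le_sum (fun j _ => hJ_nonneg j t) (Finset.mem_univ i)
  refine ⟨hJ_int, ?_⟩
  rwa [← integral_finsetSum _ fun i _ => hJ_int i, funext hsum,
    integral_finsetSum _ fun i _ => hĴ_int i]

theorem stmt3_auxiliary_problem_implies_tracking_general
    (n p N : ℕ)
    (A : Matrix (Fin n) (Fin n) ℝ)
    (B₁ : Matrix (Fin n) (Fin p) ℝ)
    (B₂ : Matrix (Fin n) (Fin n) ℝ)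
    -- graph, pinning and spectral data
    (a : Fin N → Fin N → ℝ)
    (hsymm : ∀ i j, a i j = a j i)
    (h01 : ∀ i j, a i j = 0 ∨ a i j = 1)
    (g : Fin N → ℝ) (hg01 : ∀ i, g i = 0 ∨ g i = 1)
    (L : Matrix (Fin N) (Fin N) ℝ)
    (hL : L = Matrix.diagonal (fun i => ∑ j, a i j) - Matrix.of a)
    (G : Matrix (Fin N) (Fin N) ℝ) (hG : G = Matrix.diagonal g)
    (lam : Fin N → ℝ)
    (T : Matrix (Fin N) (Fin N) ℝ)
    (hT : T * Tᵀ = 1)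
    (hTdiag : Tᵀ * (L + G) * T = Matrix.diagonal lam)
    (f : Fin N → Fin N → ℝ) (hf : f = fun i j => (Tᵀ * G * T) i j)
    (Li : (i : Fin N) → Matrix (Fin n) ({j : Fin N // j ≠ i} × Fin n) ℝ)
    (hLi : ∀ i, Li i = Matrix.of fun b x => f i x.1.1 * B₂ b x.2)
    -- weights, data of the problem
    (Q : Matrix (Fin n) (Fin n) ℝ) (hQ : Q.PosDef)
    (R : Matrix (Fin p) (Fin p) ℝ) (hR : R.PosDef)
    (e0 : Fin N × Fin n → ℝ)
    (K : Matrix (Fin p) (Fin n) ℝ)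
    (c : ℝ)
    (ε0 : Fin N × Fin n → ℝ)
    (hε0 : ε0 = (Tᵀ ⊗ₖ (1 : Matrix (Fin n) (Fin n) ℝ)).mulVec e0)
    -- hypothesis: guaranteed cost for the auxiliary interconnected large-scale system
    (haux : ∀ (ξ : Fin N → ℝ → Fin n → ℝ)
        (η : (i : Fin N) → ℝ → {j : Fin N // j ≠ i} × Fin n → ℝ)
        (ε : Fin N → ℝ → Fin n → ℝ),
      -- locally square-integrable inputs
      (∀ i (Tf : ℝ), IntegrableOn (fun t => ξ i t ⬝ᵥ ξ i t) (Set.Ioc 0 Tf)) →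
      (∀ i (Tf : ℝ), IntegrableOn (fun t => η i t ⬝ᵥ η i t) (Set.Ioc 0 Tf)) →
      -- the IQCs relating the inputs to the solution
      (∃ (tl : ℕ → ℝ) (d : ℝ), Tendsto tl atTop atTop ∧ 0 < d ∧
        ∀ l (i : Fin N),
          ((∫ t in (0:ℝ)..(tl l), ξ i t ⬝ᵥ ξ i t)
              ≤ (∫ t in (0:ℝ)..(tl l), ε i t ⬝ᵥ ε i t) + d)
          ∧ ((∫ t in (0:ℝ)..(tl l), η i t ⬝ᵥ η i t)
              ≤ (∫ t in (0:ℝ)..(tl l), ∑ j ∈ Finset.univ.erase i, ε j t ⬝ᵥ ε j t)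
                + ((N : ℝ) - 1) * d)) →
      -- ε is a solution of the interconnected system with ε_i(0) = ε0_i
      (∀ i : Fin N, ε i 0 = fun b => ε0 (i, b)) →
      (∀ i : Fin N, ∀ t ∈ Set.Ici (0:ℝ),
        HasDerivWithinAt (ε i)
          (A.mulVec (ε i t) + lam i • (B₁ * K).mulVec (ε i t)
            + (f i i - lam i) • B₂.mulVec (ξ i t) + (Li i).mulVec (η i t))
          (Set.Ici 0) t) →
      -- then the auxiliary cost is finite and below c
      ((∀ i : Fin N, IntegrableOn
          (fun t => lam i * (ε i t ⬝ᵥ Q.mulVec (ε i t))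
            + (lam i) ^ 2 * (ε i t ⬝ᵥ (Kᵀ * R * K).mulVec (ε i t))) (Set.Ioi (0:ℝ)))
        ∧ (∑ i, ∫ t in Set.Ioi (0:ℝ),
            (lam i * (ε i t ⬝ᵥ Q.mulVec (ε i t))
              + (lam i) ^ 2 * (ε i t ⬝ᵥ (Kᵀ * R * K).mulVec (ε i t)))) < c)) :
    -- conclusion: guaranteed tracking cost for the original system
    ∀ d : ℝ, 0 < d →
    ∀ φ : (ℝ → Fin n → ℝ) → (ℝ → Fin n → ℝ),
      -- φ is linear
      (∀ y z, φ (y + z) = φ y + φ z) →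
      (∀ (r : ℝ) y, φ (r • y) = r • φ y) →
      -- φ maps L₂e into L₂e
      (∀ y : ℝ → Fin n → ℝ,
        (∀ Tf : ℝ, IntegrableOn (fun t => y t ⬝ᵥ y t) (Set.Ioc 0 Tf)) →
        (∀ Tf : ℝ, IntegrableOn (fun t => φ y t ⬝ᵥ φ y t) (Set.Ioc 0 Tf))) →
      -- φ satisfies the IQC of class Ξ₀ with constant d
      (∃ tl : ℕ → ℝ, Tendsto tl atTop atTop ∧
        ∀ l, ∀ y : ℝ → Fin n → ℝ,
          (∀ Tf : ℝ, IntegrableOn (fun t => y t ⬝ᵥ y t) (Set.Ioc 0 Tf)) →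
          (∫ t in (0:ℝ)..(tl l), φ y t ⬝ᵥ φ y t)
            ≤ (∫ t in (0:ℝ)..(tl l), y t ⬝ᵥ y t) + d) →
    ∀ e : ℝ → Fin N × Fin n → ℝ,
      e 0 = e0 →
      -- e solves the closed-loop error dynamics
      (∀ t ∈ Set.Ici (0:ℝ),
        HasDerivWithinAt e
          (((1 : Matrix (Fin N) (Fin N) ℝ) ⊗ₖ A).mulVec (e t)
            + ((L + G) ⊗ₖ (B₁ * K)).mulVec (e t)
            - ((L + G) ⊗ₖ B₂).mulVec
                (fun x : Fin N × Fin n => φ (fun s b => e s (x.1, b)) t x.2)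
            + (G ⊗ₖ B₂).mulVec
                (fun x : Fin N × Fin n => φ (fun s b => e s (x.1, b)) t x.2))
          (Set.Ici 0) t) →
      -- then the tracking cost is finite and below c
      ((∀ i : Fin N, IntegrableOn
          (fun t =>
            (1 / 2) * ∑ j, a i j *
                (((fun b => e t (i, b)) - fun b => e t (j, b)) ⬝ᵥ
                  Q.mulVec ((fun b => e t (i, b)) - fun b => e t (j, b)))
            + g i * ((fun b => e t (i, b)) ⬝ᵥ Q.mulVec (fun b => e t (i, b)))
            + (-(K.mulVec (∑ j, a i j • ((fun b => e t (i, b)) - fun b => e t (j, b))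
                  + g i • fun b => e t (i, b)))) ⬝ᵥ
                R.mulVec
                  (-(K.mulVec (∑ j, a i j • ((fun b => e t (i, b)) - fun b => e t (j, b))
                    + g i • fun b => e t (i, b)))))
          (Set.Ioi (0:ℝ)))
      ∧ (∑ i, ∫ t in Set.Ioi (0:ℝ),
            ((1 / 2) * ∑ j, a i j *
                (((fun b => e t (i, b)) - fun b => e t (j, b)) ⬝ᵥ
                  Q.mulVec ((fun b => e t (i, b)) - fun b => e t (j, b)))
            + g i * ((fun b => e t (i, b)) ⬝ᵥ Q.mulVec (fun b => e t (i, b)))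
            + (-(K.mulVec (∑ j, a i j • ((fun b => e t (i, b)) - fun b => e t (j, b))
                  + g i • fun b => e t (i, b)))) ⬝ᵥ
                R.mulVec
                  (-(K.mulVec (∑ j, a i j • ((fun b => e t (i, b)) - fun b => e t (j, b))
                    + g i • fun b => e t (i, b)))))) < c) := by
  intro d hd φ hadd hsmul hmap ⟨tl, htl, hiqc⟩ e he0 hdyn
  let φL : (ℝ → Fin n → ℝ) →ₗ[ℝ] (ℝ → Fin n → ℝ) := ⟨⟨φ, hadd⟩, hsmul⟩
  set ε : Fin N → ℝ → Fin n → ℝ := fun i t b => ((Tᵀ ⊗ₖ 1) *ᵥ e t) (i, b)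
  have he_cont : ContinuousOn e (Set.Ici 0) := fun t ht => (hdyn t ht).continuousWithinAt
  have hε_L2 (i : Fin N) : MemL2e (ε i) := ContinuousOn.memL2e (by fun_prop)
  obtain ⟨hint, hlt⟩ := haux (fun i => φ (ε i)) (fun i t x => φ (ε x.1) t x.2) ε
    (fun i => hmap _ (hε_L2 i)) (MemL2e.subtype_ne fun j => hmap _ (hε_L2 j))
    (by simpa only [Fintype.card_fin] using exists_auxiliary_iqc hmap hiqc hd htl hε_L2)
    (fun i => by simp only [ε, he0, hε0])
    (fun i t ht => by
      rw [hLi, of_mulVec_subtype_ne f B₂ (fun j => φ (ε j) t), hf]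
      exact (hdyn t ht).kronecker_transform_closedLoop
        (by rw [transpose_mul_eq_conj_mul_transpose hT, hTdiag])
        (transpose_mul_eq_conj_mul_transpose hT G) φL i)
  have hLG : L + G = pinnedLaplacian a g := by rw [hL, hG]; rfl
  refine integrableOn_and_sum_integral_lt_of_sum_eq (J := fun i t => trackingCost a g Q R K (e t) i)
    (fun i => ?_) (fun i t => trackingCost_nonneg ?_ ?_ hQ.posSemidef hR.posSemidef K (e t) i)
    (fun t => sum_trackingCost_eq_sum_diagonalized hsymm K hT (hLG ▸ hTdiag) (e t)) hint hlt
  · exact ((continuous_trackingCost a g Q R K i).comp_continuousOn he_cont).mono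
      Set.Ioi_subset_Ici_self |>.aestronglyMeasurable measurableSet_Ioi
  · intro i j; rcases h01 i j with h | h <;> simp [h]
  · intro i; rcases hg01 i with h | h <;> simp [h]

/-- Lemma 2. If every solution of the auxiliary interconnected system
`ε̇_i = Aε_i + λ_iB₁Kε_i + E_iξ_i + L_iη_i`, `ε_i(0) = ε0_i`, driven by inputs satisfying the
IQCs, has cost `Ĵ = ∑ᵢ ∫₀^∞ (λᵢ εᵢ'Qεᵢ + λᵢ² εᵢ'K'RKεᵢ) dt < c`, then for every linear
operator `φ ∈ Ξ₀` with constant `d > 0`, every solution of the closed-loop error dynamics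
with `e(0) = e0` has cost `J(u) < c`. -/
theorem stmt3_auxiliary_problem_implies_tracking
    (n p N : ℕ) (hN : 2 ≤ N)
    (A : Matrix (Fin n) (Fin n) ℝ)
    (B₁ : Matrix (Fin n) (Fin p) ℝ)
    (B₂ : Matrix (Fin n) (Fin n) ℝ)
    -- graph, pinning and spectral data
    (a : Fin N → Fin N → ℝ)
    (hsymm : ∀ i j, a i j = a j i)
    (hdiaga : ∀ i, a i i = 0)
    (h01 : ∀ i j, a i j = 0 ∨ a i j = 1)
    (hconn : ∀ i j : Fin N, Relation.ReflTransGen (fun u v => a u v = 1) i j)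
    (g : Fin N → ℝ) (hg01 : ∀ i, g i = 0 ∨ g i = 1) (hgne : ∃ i, g i = 1)
    (L : Matrix (Fin N) (Fin N) ℝ)
    (hL : L = Matrix.diagonal (fun i => ∑ j, a i j) - Matrix.of a)
    (G : Matrix (Fin N) (Fin N) ℝ) (hG : G = Matrix.diagonal g)
    (lam : Fin N → ℝ) (hlampos : ∀ i, 0 < lam i)
    (T : Matrix (Fin N) (Fin N) ℝ)
    (hT : T * Tᵀ = 1)
    (hTdiag : Tᵀ * (L + G) * T = Matrix.diagonal lam)
    (f : Fin N → Fin N → ℝ) (hf : f = fun i j => (Tᵀ * G * T) i j)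
    (Li : (i : Fin N) → Matrix (Fin n) ({j : Fin N // j ≠ i} × Fin n) ℝ)
    (hLi : ∀ i, Li i = Matrix.of fun b x => f i x.1.1 * B₂ b x.2)
    -- weights, data of the problem
    (Q : Matrix (Fin n) (Fin n) ℝ) (hQ : Q.PosDef)
    (R : Matrix (Fin p) (Fin p) ℝ) (hR : R.PosDef)
    (e0 : Fin N × Fin n → ℝ)
    (K : Matrix (Fin p) (Fin n) ℝ)
    (c : ℝ) (hc : 0 < c)
    (ε0 : Fin N × Fin n → ℝ)
    (hε0 : ε0 = (Tᵀ ⊗ₖ (1 : Matrix (Fin n) (Fin n) ℝ)).mulVec e0)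
    -- hypothesis: guaranteed cost for the auxiliary interconnected large-scale system
    (haux : ∀ (ξ : Fin N → ℝ → Fin n → ℝ)
        (η : (i : Fin N) → ℝ → {j : Fin N // j ≠ i} × Fin n → ℝ)
        (ε : Fin N → ℝ → Fin n → ℝ),
      -- locally square-integrable inputs
      (∀ i (Tf : ℝ), IntegrableOn (fun t => ξ i t ⬝ᵥ ξ i t) (Set.Ioc 0 Tf)) →
      (∀ i (Tf : ℝ), IntegrableOn (fun t => η i t ⬝ᵥ η i t) (Set.Ioc 0 Tf)) →
      -- the IQCs relating the inputs to the solution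
      (∃ (tl : ℕ → ℝ) (d : ℝ), Tendsto tl atTop atTop ∧ 0 < d ∧
        ∀ l (i : Fin N),
          ((∫ t in (0:ℝ)..(tl l), ξ i t ⬝ᵥ ξ i t)
              ≤ (∫ t in (0:ℝ)..(tl l), ε i t ⬝ᵥ ε i t) + d)
          ∧ ((∫ t in (0:ℝ)..(tl l), η i t ⬝ᵥ η i t)
              ≤ (∫ t in (0:ℝ)..(tl l), ∑ j ∈ Finset.univ.erase i, ε j t ⬝ᵥ ε j t)
                + ((N : ℝ) - 1) * d)) →
      -- ε is a solution of the interconnected system with ε_i(0) = ε0_i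
      (∀ i : Fin N, ε i 0 = fun b => ε0 (i, b)) →
      (∀ i : Fin N, ∀ t ∈ Set.Ici (0:ℝ),
        HasDerivWithinAt (ε i)
          (A.mulVec (ε i t) + lam i • (B₁ * K).mulVec (ε i t)
            + (f i i - lam i) • B₂.mulVec (ξ i t) + (Li i).mulVec (η i t))
          (Set.Ici 0) t) →
      -- then the auxiliary cost is finite and below c
      ((∀ i : Fin N, IntegrableOn
          (fun t => lam i * (ε i t ⬝ᵥ Q.mulVec (ε i t))
            + (lam i) ^ 2 * (ε i t ⬝ᵥ (Kᵀ * R * K).mulVec (ε i t))) (Set.Ioi (0:ℝ)))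
        ∧ (∑ i, ∫ t in Set.Ioi (0:ℝ),
            (lam i * (ε i t ⬝ᵥ Q.mulVec (ε i t))
              + (lam i) ^ 2 * (ε i t ⬝ᵥ (Kᵀ * R * K).mulVec (ε i t)))) < c)) :
    -- conclusion: guaranteed tracking cost for the original system
    ∀ d : ℝ, 0 < d →
    ∀ φ : (ℝ → Fin n → ℝ) → (ℝ → Fin n → ℝ),
      -- φ is linear
      (∀ y z, φ (y + z) = φ y + φ z) →
      (∀ (r : ℝ) y, φ (r • y) = r • φ y) →
      -- φ maps L₂e into L₂e
      (∀ y : ℝ → Fin n → ℝ,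
        (∀ Tf : ℝ, IntegrableOn (fun t => y t ⬝ᵥ y t) (Set.Ioc 0 Tf)) →
        (∀ Tf : ℝ, IntegrableOn (fun t => φ y t ⬝ᵥ φ y t) (Set.Ioc 0 Tf))) →
      -- φ satisfies the IQC of class Ξ₀ with constant d
      (∃ tl : ℕ → ℝ, Tendsto tl atTop atTop ∧
        ∀ l, ∀ y : ℝ → Fin n → ℝ,
          (∀ Tf : ℝ, IntegrableOn (fun t => y t ⬝ᵥ y t) (Set.Ioc 0 Tf)) →
          (∫ t in (0:ℝ)..(tl l), φ y t ⬝ᵥ φ y t)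
            ≤ (∫ t in (0:ℝ)..(tl l), y t ⬝ᵥ y t) + d) →
    ∀ e : ℝ → Fin N × Fin n → ℝ,
      e 0 = e0 →
      -- e solves the closed-loop error dynamics
      (∀ t ∈ Set.Ici (0:ℝ),
        HasDerivWithinAt e
          (((1 : Matrix (Fin N) (Fin N) ℝ) ⊗ₖ A).mulVec (e t)
            + ((L + G) ⊗ₖ (B₁ * K)).mulVec (e t)
            - ((L + G) ⊗ₖ B₂).mulVec
                (fun x : Fin N × Fin n => φ (fun s b => e s (x.1, b)) t x.2)
            + (G ⊗ₖ B₂).mulVec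
                (fun x : Fin N × Fin n => φ (fun s b => e s (x.1, b)) t x.2))
          (Set.Ici 0) t) →
      -- then the tracking cost is finite and below c
      ((∀ i : Fin N, IntegrableOn
          (fun t =>
            (1 / 2) * ∑ j, a i j *
                (((fun b => e t (i, b)) - fun b => e t (j, b)) ⬝ᵥ
                  Q.mulVec ((fun b => e t (i, b)) - fun b => e t (j, b)))
            + g i * ((fun b => e t (i, b)) ⬝ᵥ Q.mulVec (fun b => e t (i, b)))
            + (-(K.mulVec (∑ j, a i j • ((fun b => e t (i, b)) - fun b => e t (j, b))
                  + g i • fun b => e t (i, b)))) ⬝ᵥ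
                R.mulVec
                  (-(K.mulVec (∑ j, a i j • ((fun b => e t (i, b)) - fun b => e t (j, b))
                    + g i • fun b => e t (i, b)))))
          (Set.Ioi (0:ℝ)))
      ∧ (∑ i, ∫ t in Set.Ioi (0:ℝ),
            ((1 / 2) * ∑ j, a i j *
                (((fun b => e t (i, b)) - fun b => e t (j, b)) ⬝ᵥ
                  Q.mulVec ((fun b => e t (i, b)) - fun b => e t (j, b)))
            + g i * ((fun b => e t (i, b)) ⬝ᵥ Q.mulVec (fun b => e t (i, b)))
            + (-(K.mulVec (∑ j, a i j • ((fun b => e t (i, b)) - fun b => e t (j, b))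
                  + g i • fun b => e t (i, b)))) ⬝ᵥ
                R.mulVec
                  (-(K.mulVec (∑ j, a i j • ((fun b => e t (i, b)) - fun b => e t (j, b))
                    + g i • fun b => e t (i, b)))))) < c) :=
  stmt3_auxiliary_problem_implies_tracking_general n p N A B₁ B₂ a hsymm h01 g hg01 L hL G hG lam T
    hT hTdiag f hf Li hLi Q hQ R hR e0 K c ε0 hε0 haux
end

section
/- If the simple undirected graph 𝒢 on nodes {1,…,N} is connected and at least one g_i equals 1 (i.e., G ≠ 0), then the symmetric matrix ℒ + G is positive definite; in particular all its eigenvalues are positive. -/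
open Matrix

/-!
The quadratic form of `ℒ + G` is `∑_{i ~ j} (x_i - x_j)² + ∑_i g_i x_i²`, a sum of two positive
semidefinite forms, so it vanishes only on vectors killed by both `ℒ` and `G`. A vector in the kernel
of the Laplacian is constant on connected components, hence constant since the graph is connected;
a constant vector killed by `G` vanishes at a pinned node, hence everywhere.
-/

section

open scoped ComplexOrder

theorem Matrix.PosSemidef.posDef_add_of_forall_mulVec_eq_zero {n 𝕜 : Type*} [Fintype n]
    [RCLike 𝕜] {A B : Matrix n n 𝕜} (hA : A.PosSemidef) (hB : B.PosSemidef)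
    (hker : ∀ x, A *ᵥ x = 0 → B *ᵥ x = 0 → x = 0) : (A + B).PosDef := by
  refine .of_dotProduct_mulVec_pos (hA.isHermitian.add hB.isHermitian) fun x hx => ?_
  have hAx := hA.dotProduct_mulVec_nonneg x
  have hBx := hB.dotProduct_mulVec_nonneg x
  rw [add_mulVec, dotProduct_add]
  refine (add_nonneg hAx hBx).lt_of_ne fun hsum => hx ?_
  obtain ⟨hA0, hB0⟩ := (add_eq_zero_iff_of_nonneg hAx hBx).1 hsum.symm
  exact hker x ((hA.dotProduct_mulVec_zero_iff x).1 hA0) ((hB.dotProduct_mulVec_zero_iff x).1 hB0)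

end

theorem Matrix.IsAdjMatrix.lapMatrix_toGraph_eq {V α : Type*} [Fintype V] [DecidableEq V]
    [Ring α] [Nontrivial α] [DecidableEq α] {A : Matrix V V α} (h : A.IsAdjMatrix) :
    h.toGraph.lapMatrix α = diagonal (fun i => ∑ j, A i j) - A := by
  have hdeg (i : V) : (h.toGraph.degree i : α) = ∑ j, A i j := by
    rw [SimpleGraph.degree_eq_sum_if_adj]
    refine Finset.sum_congr rfl fun j _ => ?_
    obtain hij | hij := h.zero_or_one i j <;> simp [hij]
  rw [SimpleGraph.lapMatrix, SimpleGraph.degMatrix, h.adjMatrix_toGraph_eq]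
  simp only [hdeg]

/-- If the simple undirected graph with 0–1 adjacency matrix `a` is
connected and at least one pinning gain `g i` equals 1, then the symmetric matrix
`ℒ + G` is positive definite (in particular all its eigenvalues are positive). -/
theorem stmt8_laplacian_plus_pinning_posdef
    (N : ℕ)
    (a : Fin N → Fin N → ℝ)
    (hsymm : ∀ i j, a i j = a j i)
    (hdiag : ∀ i, a i i = 0)
    (h01 : ∀ i j, a i j = 0 ∨ a i j = 1)
    (hconn : ∀ i j : Fin N, Relation.ReflTransGen (fun u v => a u v = 1) i j)
    (g : Fin N → ℝ)
    (hg01 : ∀ i, g i = 0 ∨ g i = 1)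
    (hgne : ∃ i, g i = 1)
    (L : Matrix (Fin N) (Fin N) ℝ)
    (hL : L = Matrix.diagonal (fun i => ∑ j, a i j) - Matrix.of a)
    (G : Matrix (Fin N) (Fin N) ℝ)
    (hG : G = Matrix.diagonal g) :
    (L + G).PosDef := by
  subst hL hG
  have hA : (Matrix.of a).IsAdjMatrix :=
    ⟨h01, IsSymm.ext fun i j => hsymm j i, hdiag⟩
  have hg : 0 ≤ g := fun i => (hg01 i).elim (·.ge) fun h => h ▸ zero_le_one
  rw [show diagonal (fun i => ∑ j, a i j) - of a = hA.toGraph.lapMatrix ℝ from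
    hA.lapMatrix_toGraph_eq.symm]
  refine (SimpleGraph.posSemidef_lapMatrix ℝ _).posDef_add_of_forall_mulVec_eq_zero
    (.diagonal hg) fun x hLx hGx => ?_
  rw [SimpleGraph.lapMatrix_mulVec_eq_zero_iff_forall_reachable] at hLx
  obtain ⟨i₀, hi₀⟩ := hgne
  have hxi₀ : x i₀ = 0 := by
    simpa [mulVec_diagonal, hi₀] using congrFun hGx i₀
  funext j
  rw [← hLx i₀ j ((SimpleGraph.reachable_iff_reflTransGen _ _).2 (hconn i₀ j)), hxi₀, Pi.zero_apply]
end

section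
/- Let Y = Y' > 0 in ℝ^{n×n}, K ∈ ℝ^{p×n}, Q = Q' > 0, R = R' > 0, and constants λ_i > 0, π_i > 0, θ_i > 0, p_i, q_i ∈ ℝ (i = 1,…,N, N ≥ 2), with θ̄_i = ∑_{j≠i} θ_j. Suppose that for every i the Riccati inequality holds with F = K Y: A Y + Y A' + (p_i²/π_i + q_i²/θ_i) B₂ B₂' + Y (λ_i Q + (π_i + θ̄_i) I) Y + λ_i² Y K' R K Y + λ_i Y K' B₁' + λ_i B₁ K Y < 0 (negative definite). Then for all vectors ε_1,…,ε_N ∈ ℝⁿ not all zero, all ξ_i ∈ ℝⁿ and all η_i ∈ ℝ^{(N−1)n} (i = 1,…,N): ∑_{i=1}^N [ ε_i' (Y^{-1}(A + λ_i B₁ K) + (A + λ_i B₁ K)' Y^{-1}) ε_i + 2 p_i ε_i' Y^{-1} B₂ ξ_i + 2 ε_i' Y^{-1} L_i η_i ] < ∑_{i=1}^N [ π_i (‖ξ_i‖² − ‖ε_i‖²) + θ_i (‖η_i‖² − ∑_{j≠i} ‖ε_j‖²) ] − ∑_{i=1}^N ε_i' (λ_i² K' R K + λ_i Q) ε_i,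 where L_i ∈ ℝ^{n×(N−1)n} is any matrix with L_i L_i' = q_i² B₂ B₂' (in particular L_i = B₂[f_{i,1}I,…,f_{i,i−1}I,f_{i,i+1}I,…,f_{i,N}I] with q_i² = ∑_{j≠i} f_{ij}²). -/
/-!
Conjugating the Riccati matrix by `Y⁻¹` shows that its quadratic form at `Y⁻¹εᵢ` is the
Lyapunov term `εᵢ'(Y⁻¹Aᵢ + Aᵢ'Y⁻¹)εᵢ` plus `(pᵢ²/πᵢ + qᵢ²/θᵢ)‖B₂'Y⁻¹εᵢ‖²` plus the penalty
terms. Young's inequality bounds the cross terms `2pᵢεᵢ'Y⁻¹B₂ξᵢ` and `2εᵢ'Y⁻¹Lᵢηᵢ` by exactly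
these `B₂`-terms, because `‖Lᵢ'Y⁻¹εᵢ‖² = qᵢ²‖B₂'Y⁻¹εᵢ‖²`. Summing over `i` and exchanging
`∑ᵢ θᵢ ∑_{j≠i} = ∑ᵢ θ̄ᵢ`, the sum of the Riccati quadratic forms is left over as slack, and it
is positive because some `εᵢ ≠ 0` and `Y⁻¹` is injective.
-/

open Matrix

theorem two_mul_mul_dotProduct_le {m : Type*} [Fintype m] (c : ℝ) {t : ℝ} (ht : 0 < t)
    (u x : m → ℝ) :
    2 * c * (u ⬝ᵥ x) ≤ c ^ 2 / t * (u ⬝ᵥ u) + t * (x ⬝ᵥ x) := by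
  simp only [dotProduct, Finset.mul_sum, ← Finset.sum_add_distrib]
  gcongr with k
  rw [div_mul_eq_mul_div, ← sub_nonneg]
  have key : c ^ 2 * (u k * u k) / t + t * (x k * x k) - 2 * c * (u k * x k)
      = (c * u k - t * x k) ^ 2 / t := by
    field_simp; ring
  rw [key]; positivity

theorem Finset.sum_mul_sum_univ_erase {ι R : Type*} [Fintype ι] [DecidableEq ι]
    [NonUnitalNonAssocSemiring R] (θ a : ι → R) :
    ∑ i, θ i * ∑ j ∈ univ.erase i, a j = ∑ i, (∑ j ∈ univ.erase i, θ j) * a i := by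
  simp_rw [Finset.mul_sum, Finset.sum_mul]
  exact Finset.sum_comm' fun i j => by simp [eq_comm]

theorem dotProduct_mulVec_eq_transpose_mulVec_dotProduct {k m R : Type*} [Fintype k] [Fintype m]
    [CommSemiring R] (M : Matrix k m R) (x : k → R) (y : m → R) :
    x ⬝ᵥ (M *ᵥ y) = (Mᵀ *ᵥ x) ⬝ᵥ y := by
  rw [dotProduct_mulVec, mulVec_transpose]

theorem dotProduct_mul_transpose_mulVec {k m R : Type*} [Fintype k] [Fintype m]
    [CommSemiring R] (M : Matrix k m R) (x : k → R) :
    x ⬝ᵥ ((M * Mᵀ) *ᵥ x) = (Mᵀ *ᵥ x) ⬝ᵥ (Mᵀ *ᵥ x) := by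
  rw [← mulVec_mulVec, dotProduct_mulVec_eq_transpose_mulVec_dotProduct]

theorem transpose_mulVec_dotProduct_of_mul_transpose_eq_smul {k l m r R : Type*} [Fintype k]
    [Fintype l] [Fintype m] [Fintype r] [CommSemiring R] {L : Matrix m l R} {B : Matrix m r R}
    {a : R} (hL : L * Lᵀ = a • (B * Bᵀ)) (S : Matrix k m R) (x : k → R) :
    ((S * L)ᵀ *ᵥ x) ⬝ᵥ ((S * L)ᵀ *ᵥ x) = a * (((S * B)ᵀ *ᵥ x) ⬝ᵥ ((S * B)ᵀ *ᵥ x)) := by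
  rw [← dotProduct_mul_transpose_mulVec, ← dotProduct_mul_transpose_mulVec, transpose_mul,
    transpose_mul, Matrix.mul_assoc, ← Matrix.mul_assoc L, hL, Matrix.smul_mul, Matrix.mul_smul,
    smul_mulVec, dotProduct_smul, smul_eq_mul, Matrix.mul_assoc, Matrix.mul_assoc]

section Riccati

variable {n m r : Type*} [Fintype n] [DecidableEq n] [Fintype m] [Fintype r]
  (A : Matrix n n ℝ) (B₁ : Matrix n m ℝ) (B₂ : Matrix n r ℝ) (Y Q : Matrix n n ℝ)
  (K : Matrix m n ℝ) (R : Matrix m m ℝ)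

/-- The matrix of the paper's Riccati inequality with `F = K Y`, `c = p²/π + q²/θ` and
`w = π + θ̄`. -/
def riccatiMatrix (l c w : ℝ) : Matrix n n ℝ :=
  A * Y + Y * Aᵀ + c • (B₂ * B₂ᵀ) + Y * (l • Q + w • (1 : Matrix n n ℝ)) * Y
    + l ^ 2 • (Y * Kᵀ * R * K * Y) + l • (Y * Kᵀ * B₁ᵀ) + l • (B₁ * K * Y)

variable {Y}

theorem inv_mul_riccatiMatrix_mul_inv (hYt : Yᵀ = Y) (hY : IsUnit Y.det) (l c w : ℝ) :
    Y⁻¹ * riccatiMatrix A B₁ B₂ Y Q K R l c w * Y⁻¹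
      = Y⁻¹ * (A + l • (B₁ * K)) + (A + l • (B₁ * K))ᵀ * Y⁻¹
        + c • (Y⁻¹ * B₂ * (Y⁻¹ * B₂)ᵀ) + w • 1 + (l ^ 2 • (Kᵀ * R * K) + l • Q) := by
  have hinvt : Y⁻¹ᵀ = Y⁻¹ := by rw [transpose_nonsing_inv, hYt]
  simp only [riccatiMatrix, Matrix.mul_add, Matrix.add_mul, Matrix.smul_mul, Matrix.mul_smul,
    transpose_add, transpose_smul, transpose_mul, hinvt, Matrix.mul_one, Matrix.mul_assoc,
    nonsing_inv_mul_cancel_left _ _ hY, mul_nonsing_inv Y hY]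
  abel

theorem riccatiMatrix_quadForm_inv_mulVec (hYt : Yᵀ = Y) (hY : IsUnit Y.det) (l c w : ℝ)
    (x : n → ℝ) :
    (Y⁻¹ *ᵥ x) ⬝ᵥ (riccatiMatrix A B₁ B₂ Y Q K R l c w *ᵥ (Y⁻¹ *ᵥ x))
      = x ⬝ᵥ ((Y⁻¹ * (A + l • (B₁ * K)) + (A + l • (B₁ * K))ᵀ * Y⁻¹) *ᵥ x)
        + c * (((Y⁻¹ * B₂)ᵀ *ᵥ x) ⬝ᵥ ((Y⁻¹ * B₂)ᵀ *ᵥ x)) + w * (x ⬝ᵥ x)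
        + x ⬝ᵥ ((l ^ 2 • (Kᵀ * R * K) + l • Q) *ᵥ x) := by
  have hinvt : Y⁻¹ᵀ = Y⁻¹ := by rw [transpose_nonsing_inv, hYt]
  rw [← dotProduct_mul_transpose_mulVec, mulVec_mulVec, ← hinvt,
    ← dotProduct_mulVec_eq_transpose_mulVec_dotProduct, mulVec_mulVec, hinvt, ← Matrix.mul_assoc,
    inv_mul_riccatiMatrix_mul_inv A B₁ B₂ Q K R hYt hY]
  simp only [add_mulVec, smul_mulVec, one_mulVec, dotProduct_add, dotProduct_smul, smul_eq_mul]

theorem dissipation_add_riccati_le (hYt : Yᵀ = Y) (hY : IsUnit Y.det) {π θ : ℝ} (hπ : 0 < π)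
    (hθ : 0 < θ) (l p q θ' : ℝ) {k : Type*} [Fintype k] (L : Matrix n k ℝ)
    (hL : L * Lᵀ = q ^ 2 • (B₂ * B₂ᵀ)) (x : n → ℝ) (ξ : r → ℝ) (η : k → ℝ) :
    x ⬝ᵥ ((Y⁻¹ * (A + l • (B₁ * K)) + (A + l • (B₁ * K))ᵀ * Y⁻¹) *ᵥ x)
        + 2 * p * (x ⬝ᵥ (Y⁻¹ * B₂) *ᵥ ξ) + 2 * (x ⬝ᵥ (Y⁻¹ * L) *ᵥ η)
        + (Y⁻¹ *ᵥ x) ⬝ᵥ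
            (-riccatiMatrix A B₁ B₂ Y Q K R l (p ^ 2 / π + q ^ 2 / θ) (π + θ') *ᵥ (Y⁻¹ *ᵥ x))
      ≤ π * (ξ ⬝ᵥ ξ - x ⬝ᵥ x) + θ * (η ⬝ᵥ η) - θ' * (x ⬝ᵥ x)
        - x ⬝ᵥ ((l ^ 2 • (Kᵀ * R * K) + l • Q) *ᵥ x) := by
  set u := (Y⁻¹ * B₂)ᵀ *ᵥ x
  have young_ξ := two_mul_mul_dotProduct_le p hπ u ξ
  have young_η := two_mul_mul_dotProduct_le 1 hθ ((Y⁻¹ * L)ᵀ *ᵥ x) η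
  rw [transpose_mulVec_dotProduct_of_mul_transpose_eq_smul hL] at young_η
  rw [neg_mulVec, dotProduct_neg, riccatiMatrix_quadForm_inv_mulVec A B₁ B₂ Q K R hYt hY,
    dotProduct_mulVec_eq_transpose_mulVec_dotProduct (Y⁻¹ * B₂),
    dotProduct_mulVec_eq_transpose_mulVec_dotProduct (Y⁻¹ * L)]
  have hsplit : (p ^ 2 / π + q ^ 2 / θ) * (u ⬝ᵥ u)
      = p ^ 2 / π * (u ⬝ᵥ u) + 1 ^ 2 / θ * (q ^ 2 * (u ⬝ᵥ u)) := by
    ring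
  linarith

end Riccati

theorem stmt10_dissipation_inequality_general
    (n p N : ℕ)
    (A : Matrix (Fin n) (Fin n) ℝ)
    (B₁ : Matrix (Fin n) (Fin p) ℝ)
    (B₂ : Matrix (Fin n) (Fin n) ℝ)
    (Y : Matrix (Fin n) (Fin n) ℝ) (hY : Y.PosDef)
    (K : Matrix (Fin p) (Fin n) ℝ)
    (Q : Matrix (Fin n) (Fin n) ℝ)
    (R : Matrix (Fin p) (Fin p) ℝ)
    (lam πc θc : Fin N → ℝ)
    (hπ : ∀ i, 0 < πc i) (hθ : ∀ i, 0 < θc i)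
    (pc qc : Fin N → ℝ)
    (Li : (i : Fin N) → Matrix (Fin n) ({j : Fin N // j ≠ i} × Fin n) ℝ)
    (hLi : ∀ i, Li i * (Li i)ᵀ = (qc i) ^ 2 • (B₂ * B₂ᵀ))
    (hRiccati : ∀ i,
      (-(A * Y + Y * Aᵀ + ((pc i) ^ 2 / πc i + (qc i) ^ 2 / θc i) • (B₂ * B₂ᵀ)
        + Y * (lam i • Q + (πc i + ∑ j ∈ Finset.univ.erase i, θc j) •
            (1 : Matrix (Fin n) (Fin n) ℝ)) * Y
        + (lam i) ^ 2 • (Y * Kᵀ * R * K * Y)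
        + lam i • (Y * Kᵀ * B₁ᵀ) + lam i • (B₁ * K * Y))).PosDef)
    (ε ξ : Fin N → Fin n → ℝ)
    (hεne : ∃ i, ε i ≠ 0)
    (η : (i : Fin N) → {j : Fin N // j ≠ i} × Fin n → ℝ) :
    ∑ i, (ε i ⬝ᵥ ((Y⁻¹ * (A + lam i • (B₁ * K))
            + (A + lam i • (B₁ * K))ᵀ * Y⁻¹).mulVec (ε i))
        + 2 * pc i * (ε i ⬝ᵥ (Y⁻¹ * B₂).mulVec (ξ i))
        + 2 * (ε i ⬝ᵥ (Y⁻¹ * Li i).mulVec (η i)))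
      < ∑ i, (πc i * (ξ i ⬝ᵥ ξ i - ε i ⬝ᵥ ε i)
          + θc i * (η i ⬝ᵥ η i - ∑ j ∈ Finset.univ.erase i, ε j ⬝ᵥ ε j))
        - ∑ i, ε i ⬝ᵥ (((lam i) ^ 2 • (Kᵀ * R * K) + lam i • Q).mulVec (ε i)) := by
  have hYt : Yᵀ = Y := hY.isHermitian.eq
  have hYu : IsUnit Y.det := (isUnit_iff_isUnit_det Y).mp hY.isUnit
  set θbar : Fin N → ℝ := fun i => ∑ j ∈ Finset.univ.erase i, θc j
  set M : Fin N → Matrix (Fin n) (Fin n) ℝ := fun i =>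
    -riccatiMatrix A B₁ B₂ Y Q K R (lam i) (pc i ^ 2 / πc i + qc i ^ 2 / θc i) (πc i + θbar i)
  have hM (i : Fin N) : (M i).PosDef := hRiccati i
  set g : Fin N → ℝ := fun i => (Y⁻¹ *ᵥ ε i) ⬝ᵥ (M i *ᵥ (Y⁻¹ *ᵥ ε i))
  have hg_nonneg (i : Fin N) : 0 ≤ g i := by
    have h := (hM i).posSemidef.dotProduct_mulVec_nonneg (Y⁻¹ *ᵥ ε i)
    rw [star_trivial] at h
    exact h
  have hg_pos : 0 < ∑ i, g i := by
    obtain ⟨i₀, hi₀⟩ := hεne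
    have hinj := mulVec_injective_iff_isUnit.mpr hY.inv.isUnit
    refine Finset.sum_pos' (fun i _ => hg_nonneg i) ⟨i₀, Finset.mem_univ _, ?_⟩
    have h := (hM i₀).dotProduct_mulVec_pos ((hinj.ne hi₀).trans_eq (mulVec_zero _))
    rw [star_trivial] at h
    exact h
  have hterm (i : Fin N) := dissipation_add_riccati_le A B₁ B₂ Q K R hYt hYu (hπ i) (hθ i) (lam i)
    (pc i) (qc i) (θbar i) (Li i) (hLi i) (ε i) (ξ i) (η i)
  have hswap := Finset.sum_mul_sum_univ_erase θc fun i => ε i ⬝ᵥ ε i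
  have hsum := Finset.sum_le_sum fun i (_ : i ∈ Finset.univ) => hterm i
  simp only [Finset.sum_add_distrib, Finset.sum_sub_distrib, mul_sub] at hsum ⊢
  linarith

/-- The algebraic dissipation inequality behind the Lyapunov argument of
Theorem 1: if the Riccati inequalities (with `F = KY`) hold for every `i`, then for all
vectors `ε_i` (not all zero), `ξ_i`, `η_i`,
`∑ᵢ [ εᵢ'(Y⁻¹(A+λᵢB₁K) + (A+λᵢB₁K)'Y⁻¹)εᵢ + 2pᵢ εᵢ'Y⁻¹B₂ξᵢ + 2εᵢ'Y⁻¹Lᵢηᵢ ]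
 < ∑ᵢ [ πᵢ(‖ξᵢ‖²-‖εᵢ‖²) + θᵢ(‖ηᵢ‖² - ∑_{j≠i}‖εⱼ‖²) ] - ∑ᵢ εᵢ'(λᵢ²K'RK + λᵢQ)εᵢ`,
where `Lᵢ` is any matrix with `LᵢLᵢ' = qᵢ² B₂B₂'`. -/
theorem stmt10_dissipation_inequality
    (n p N : ℕ) (hN : 2 ≤ N)
    (A : Matrix (Fin n) (Fin n) ℝ)
    (B₁ : Matrix (Fin n) (Fin p) ℝ)
    (B₂ : Matrix (Fin n) (Fin n) ℝ)
    (Y : Matrix (Fin n) (Fin n) ℝ) (hY : Y.PosDef)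
    (K : Matrix (Fin p) (Fin n) ℝ)
    (Q : Matrix (Fin n) (Fin n) ℝ) (hQ : Q.PosDef)
    (R : Matrix (Fin p) (Fin p) ℝ) (hR : R.PosDef)
    (lam πc θc : Fin N → ℝ)
    (hlam : ∀ i, 0 < lam i) (hπ : ∀ i, 0 < πc i) (hθ : ∀ i, 0 < θc i)
    (pc qc : Fin N → ℝ)
    (Li : (i : Fin N) → Matrix (Fin n) ({j : Fin N // j ≠ i} × Fin n) ℝ)
    (hLi : ∀ i, Li i * (Li i)ᵀ = (qc i) ^ 2 • (B₂ * B₂ᵀ))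
    (hRiccati : ∀ i,
      (-(A * Y + Y * Aᵀ + ((pc i) ^ 2 / πc i + (qc i) ^ 2 / θc i) • (B₂ * B₂ᵀ)
        + Y * (lam i • Q + (πc i + ∑ j ∈ Finset.univ.erase i, θc j) •
            (1 : Matrix (Fin n) (Fin n) ℝ)) * Y
        + (lam i) ^ 2 • (Y * Kᵀ * R * K * Y)
        + lam i • (Y * Kᵀ * B₁ᵀ) + lam i • (B₁ * K * Y))).PosDef)
    (ε ξ : Fin N → Fin n → ℝ)
    (hεne : ∃ i, ε i ≠ 0)
    (η : (i : Fin N) → {j : Fin N // j ≠ i} × Fin n → ℝ) :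
    ∑ i, (ε i ⬝ᵥ ((Y⁻¹ * (A + lam i • (B₁ * K))
            + (A + lam i • (B₁ * K))ᵀ * Y⁻¹).mulVec (ε i))
        + 2 * pc i * (ε i ⬝ᵥ (Y⁻¹ * B₂).mulVec (ξ i))
        + 2 * (ε i ⬝ᵥ (Y⁻¹ * Li i).mulVec (η i)))
      < ∑ i, (πc i * (ξ i ⬝ᵥ ξ i - ε i ⬝ᵥ ε i)
          + θc i * (η i ⬝ᵥ η i - ∑ j ∈ Finset.univ.erase i, ε j ⬝ᵥ ε j))
        - ∑ i, ε i ⬝ᵥ (((lam i) ^ 2 • (Kᵀ * R * K) + lam i • Q).mulVec (ε i)) :=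
  stmt10_dissipation_inequality_general n p N A B₁ B₂ Y hY K Q R lam πc θc hπ hθ pc qc Li hLi
    hRiccati ε ξ hεne η
end
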